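/- arXiv:2406.15779 — 10 statements merged into one kernel-verified Lean document; each statement's English description precedes it below -/
import Mathlib

section
/- Let K be a compact Hausdorff space and d a lower semicontinuous metric on K. Then (a) the topology generated on K by the metric d is finer than the original topology of K, and (b) the metric space (K, d) is complete. -/
/-!
The sections `y ↦ d x y` and `y ↦ d y z` are lower semicontinuous. For (a), `y ↦ d x y`
attains a positive minimum on the compact set `Uᶜ`, and the ball of that radius lies in `U`. For (b), a cluster point `x` of a `d`-Cauchy
sequence exists by compactness; sublevel sets of `y ↦ d y (u n)` are closed, so any bound
on `d (u m) (u n)` for all large `m` passes to `d x (u n)`.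
-/

open Filter Set Topology

section Semicontinuity

variable {X β : Type*} [TopologicalSpace X] [LinearOrder β] {f : X → β}

theorem LowerSemicontinuous.exists_lt_forall_le_of_isCompact [NoMaxOrder β]
    (hf : LowerSemicontinuous f) {s : Set X} (hs : IsCompact s) {a : β}
    (hlt : ∀ z ∈ s, a < f z) : ∃ b, a < b ∧ ∀ z ∈ s, b ≤ f z := by
  rcases s.eq_empty_or_nonempty with rfl | hne
  · obtain ⟨b, hb⟩ := exists_gt a
    exact ⟨b, hb, fun _ hz => hz.elim⟩
  · obtain ⟨z₀, hz₀, hmin⟩ := (hf.lowerSemicontinuousOn s).exists_isMinOn hne hs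
    exact ⟨f z₀, hlt z₀ hz₀, hmin⟩

theorem LowerSemicontinuous.le_of_mapClusterPt (hf : LowerSemicontinuous f)
    {ι : Type*} {l : Filter ι} {u : ι → X} {x : X} (hx : MapClusterPt x l u) {c : β}
    (hc : ∀ᶠ i in l, f (u i) ≤ c) : f x ≤ c :=
  (hf.isClosed_preimage c).mem_of_mapClusterPt hx hc

end Semicontinuity

theorem lsc_metric_finer_and_complete_general
    {K : Type*} [TopologicalSpace K] [CompactSpace K]
    (d : K → K → ℝ)
    (hd_nonneg : ∀ x y, 0 ≤ d x y)
    (hd_eq : ∀ x y, d x y = 0 ↔ x = y)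
    (hd_lsc : LowerSemicontinuous fun p : K × K => d p.1 p.2) :
    (∀ U : Set K, IsOpen U → ∀ x ∈ U, ∃ ε > 0, {y : K | d x y < ε} ⊆ U) ∧
    (∀ u : ℕ → K, (∀ ε > 0, ∃ N : ℕ, ∀ m ≥ N, ∀ n ≥ N, d (u m) (u n) < ε) →
      ∃ x : K, ∀ ε > 0, ∃ N : ℕ, ∀ n ≥ N, d x (u n) < ε) := by
  constructor
  · intro U hU x hx
    have hpos : ∀ z ∈ Uᶜ, 0 < d x z := fun z hz =>
      (hd_nonneg x z).lt_of_ne fun h => hz ((hd_eq x z).1 h.symm ▸ hx)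
    obtain ⟨ε, hε, hle⟩ := (hd_lsc.comp (Continuous.prodMk_right x))
      |>.exists_lt_forall_le_of_isCompact hU.isClosed_compl.isCompact hpos
    exact ⟨ε, hε, fun y hy => not_not.1 fun hyU => (hle y hyU).not_gt hy⟩
  · intro u hu
    obtain ⟨x, hx⟩ := exists_clusterPt_of_compactSpace (map u atTop)
    refine ⟨x, fun ε hε => ?_⟩
    obtain ⟨N, hN⟩ := hu (ε / 2) (half_pos hε)
    refine ⟨N, fun n hn => ?_⟩
    have hxn : d x (u n) ≤ ε / 2 :=
      (hd_lsc.comp (continuous_id.prodMk continuous_const)).le_of_mapClusterPt hx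
        (eventually_atTop.2 ⟨N, fun m hm => (hN m hm n hn).le⟩)
    linarith

/-- Let `K` be a compact Hausdorff space and `d` a lower semicontinuous
metric on `K`. Then (a) the topology generated by `d` is finer than the topology of `K`
(every open set of `K` contains a `d`-ball around each of its points), and
(b) `(K, d)` is complete (every `d`-Cauchy sequence `d`-converges). -/
theorem lsc_metric_finer_and_complete
    {K : Type*} [TopologicalSpace K] [CompactSpace K] [T2Space K]
    (d : K → K → ℝ)
    (hd_nonneg : ∀ x y, 0 ≤ d x y)
    (hd_symm : ∀ x y, d x y = d y x)
    (hd_eq : ∀ x y, d x y = 0 ↔ x = y)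
    (hd_tri : ∀ x y z, d x z ≤ d x y + d y z)
    (hd_lsc : LowerSemicontinuous fun p : K × K => d p.1 p.2) :
    (∀ U : Set K, IsOpen U → ∀ x ∈ U, ∃ ε > 0, {y : K | d x y < ε} ⊆ U) ∧
    (∀ u : ℕ → K, (∀ ε > 0, ∃ N : ℕ, ∀ m ≥ N, ∀ n ≥ N, d (u m) (u n) < ε) →
      ∃ x : K, ∀ ε > 0, ∃ N : ℕ, ∀ n ≥ N, d x (u n) < ε) :=
  lsc_metric_finer_and_complete_general d hd_nonneg hd_eq hd_lsc
end

section
/- Let K be a compact Hausdorff space and d a lower semicontinuous metric on K. Then every continuous function f : K → ℝ is uniformly continuous with respect to d: for every ε > 0 there is δ > 0 such that for all t₁, t₂ ∈ K with d(t₁, t₂) < δ one has |f(t₁) − f(t₂)| < ε. -/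
/-- Let `K` be a compact Hausdorff space and `d` a lower semicontinuous
metric on `K`. Then every continuous `f : K → ℝ` is uniformly continuous with respect
to `d`. -/
theorem continuous_is_uniformly_continuous_wrt_lsc_metric
    {K : Type*} [TopologicalSpace K] [CompactSpace K] [T2Space K]
    (d : K → K → ℝ)
    (hd_nonneg : ∀ x y, 0 ≤ d x y)
    (hd_symm : ∀ x y, d x y = d y x)
    (hd_eq : ∀ x y, d x y = 0 ↔ x = y)
    (hd_tri : ∀ x y z, d x z ≤ d x y + d y z)
    (hd_lsc : LowerSemicontinuous fun p : K × K => d p.1 p.2)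
    (f : K → ℝ) (hf : Continuous f) :
    ∀ ε > 0, ∃ δ > 0, ∀ t₁ t₂ : K, d t₁ t₂ < δ → |f t₁ - f t₂| < ε := by
  intro ε hε
  set S : Set (K × K) := {p | ε ≤ |f p.1 - f p.2|} with hS
  have hScl : IsClosed S :=
    isClosed_le continuous_const (((hf.comp continuous_fst).sub (hf.comp continuous_snd)).abs)
  have hScomp : IsCompact S := hScl.isCompact
  have hopen : ∀ n : ℕ, IsOpen {p : K × K | (1 : ℝ) / (n + 1) < d p.1 p.2} := by
    intro n
    have := lowerSemicontinuous_iff_isOpen_preimage.1 hd_lsc ((1 : ℝ) / (n + 1))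
    simpa [Set.preimage, Set.Ioi] using this
  have cover : S ⊆ ⋃ n : ℕ, {p : K × K | (1 : ℝ) / (n + 1) < d p.1 p.2} := by
    intro p hp
    have hne : p.1 ≠ p.2 := by
      intro h
      have : |f p.1 - f p.2| = 0 := by rw [h]; simp
      have hp' : ε ≤ |f p.1 - f p.2| := hp
      rw [this] at hp'
      linarith
    have hpos : 0 < d p.1 p.2 :=
      lt_of_le_of_ne (hd_nonneg _ _) fun h => hne ((hd_eq _ _).1 h.symm)
    obtain ⟨n, hn⟩ := exists_nat_one_div_lt hpos
    exact Set.mem_iUnion.2 ⟨n, hn⟩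
  obtain ⟨t, ht⟩ := hScomp.elim_finite_subcover _ hopen cover
  set N : ℕ := t.sup id with hN
  refine ⟨(1 : ℝ) / (N + 1), by positivity, ?_⟩
  intro t₁ t₂ hlt
  by_contra h
  push_neg at h
  have hmem : (t₁, t₂) ∈ S := h
  obtain ⟨n, hn, hdn⟩ := Set.mem_iUnion₂.1 (ht hmem)
  have hnN : (n : ℕ) ≤ N := Finset.le_sup (f := id) hn
  have : (1 : ℝ) / (N + 1) ≤ 1 / (n + 1) := by
    apply one_div_le_one_div_of_le (by positivity)
    exact_mod_cast Nat.succ_le_succ hnN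
  simp only [Set.mem_setOf_eq] at hdn
  linarith
end

section
/- Let X be a nonzero closed linear subspace of C(K). Then either the set {f ∈ X : f is d-Lipschitz} is of first category (meager) in X, or every element of X is d-Lipschitz and there exists λ > 0 such that L(f) ≤ λ‖f‖∞ for every f ∈ X. -/
/-!
The `d`-Lipschitz members of `X` form `⋃ n, (n + 1) • B`, where `B` is the set of `f` with
`|f t₁ - f t₂| ≤ d t₁ t₂`: a closed, convex, symmetric set. If `B` has empty interior, every
`(n + 1) • B` is closed and nowhere dense, so the union is meagre. Otherwise convexity and symmetry
put `0` in the interior of `B`, so `B` contains a ball of some radius `r`; then the gauge of `B`,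
which dominates the least Lipschitz constant, is at most `‖f‖ / r`.
-/

open Set Topology Pointwise

section TopologicalVectorSpace

variable {E : Type*} [AddCommGroup E] [Module ℝ E] [TopologicalSpace E] [IsTopologicalAddGroup E]
  [ContinuousConstSMul ℝ E]

theorem zero_mem_interior_of_convex_of_neg_mem {B : Set E} (hconv : Convex ℝ B)
    (hneg : ∀ x ∈ B, -x ∈ B) (hB : (interior B).Nonempty) : (0 : E) ∈ interior B := by
  obtain ⟨x, hx⟩ := hB
  have hnx : -x ∈ interior B := by
    change x ∈ Homeomorph.neg E ⁻¹' interior B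
    rw [Homeomorph.preimage_interior]
    exact interior_mono hneg hx
  simpa using hconv.interior hx hnx one_half_pos.le one_half_pos.le (add_halves 1)

theorem isMeagre_iUnion_smul_or_mem_nhds_zero {ι : Type*} [Countable ι] {B : Set E}
    (hclosed : IsClosed B) (hconv : Convex ℝ B) (hneg : ∀ x ∈ B, -x ∈ B) {c : ι → ℝ}
    (hc : ∀ i, c i ≠ 0) : IsMeagre (⋃ i, c i • B) ∨ B ∈ 𝓝 0 := by
  rcases (interior B).eq_empty_or_nonempty with hint | hint
  · refine .inl <| isMeagre_iUnion fun i => IsNowhereDense.isMeagre ?_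
    rw [(hclosed.smul_of_ne_zero (hc i)).isNowhereDense_iff,
      interior_smul₀ (hc i), hint, smul_set_empty]
  · exact .inr <| mem_interior_iff_mem_nhds.1 <|
      zero_mem_interior_of_convex_of_neg_mem hconv hneg hint

end TopologicalVectorSpace

theorem gauge_preimage {E F : Type*} [AddCommGroup E] [Module ℝ E] [AddCommGroup F] [Module ℝ F]
    (φ : E →ₗ[ℝ] F) (s : Set F) (x : E) : gauge (φ ⁻¹' s) x = gauge s (φ x) := by
  simp only [gauge_def]
  congr 1
  ext r
  refine and_congr_right fun hr => ?_
  rw [← (ne_of_gt hr).isUnit.preimage_smul_set φ]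
  rfl

section LipschitzBound

variable {K : Type*} (d : K → K → ℝ)

def HasLipschitzBound (L : ℝ) (f : K → ℝ) : Prop :=
  ∀ t₁ t₂, |f t₁ - f t₂| ≤ L * d t₁ t₂

/-- Since `sInf ∅ = 0`, this is the least Lipschitz constant only when `f` has some bound. -/
noncomputable def lipschitzConst (f : K → ℝ) : ℝ :=
  sInf {L | 0 ≤ L ∧ HasLipschitzBound d L f}

def lipschitzUnitBall : Set (K → ℝ) :=
  {f | HasLipschitzBound d 1 f}

variable {d}

theorem HasLipschitzBound.mono (hd : ∀ t₁ t₂, 0 ≤ d t₁ t₂) {L L' : ℝ} {f : K → ℝ}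
    (hf : HasLipschitzBound d L f) (hLL' : L ≤ L') : HasLipschitzBound d L' f :=
  fun t₁ t₂ => (hf t₁ t₂).trans (mul_le_mul_of_nonneg_right hLL' (hd t₁ t₂))

theorem mem_smul_lipschitzUnitBall_iff {c : ℝ} (hc : 0 < c) {f : K → ℝ} :
    f ∈ c • lipschitzUnitBall d ↔ HasLipschitzBound d c f := by
  rw [mem_smul_set_iff_inv_smul_mem₀ hc.ne']
  refine forall₂_congr fun t₁ t₂ => ?_
  rw [Pi.smul_apply, Pi.smul_apply, smul_eq_mul, smul_eq_mul, ← mul_sub, abs_mul,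
    abs_of_pos (inv_pos.2 hc), one_mul, inv_mul_le_iff₀ hc]

variable (d)

theorem isClosed_lipschitzUnitBall : IsClosed (lipschitzUnitBall d) := by
  simp only [lipschitzUnitBall, HasLipschitzBound, ofPred_forall]
  exact isClosed_iInter fun t₁ => isClosed_iInter fun t₂ =>
    isClosed_le (by fun_prop) continuous_const

theorem convex_lipschitzUnitBall : Convex ℝ (lipschitzUnitBall d) := by
  intro f hf g hg a b ha hb hab t₁ t₂
  calc |(a • f + b • g) t₁ - (a • f + b • g) t₂|
      = |a * (f t₁ - f t₂) + b * (g t₁ - g t₂)| := by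
        simp only [Pi.add_apply, Pi.smul_apply, smul_eq_mul]; ring_nf
    _ ≤ a * |f t₁ - f t₂| + b * |g t₁ - g t₂| := by
        grw [abs_add_le, abs_mul, abs_mul, abs_of_nonneg ha, abs_of_nonneg hb]
    _ ≤ a * (1 * d t₁ t₂) + b * (1 * d t₁ t₂) := by grw [hf t₁ t₂, hg t₁ t₂]
    _ = 1 * d t₁ t₂ := by rw [← add_mul, hab, one_mul]

theorem neg_mem_lipschitzUnitBall {f : K → ℝ} (hf : f ∈ lipschitzUnitBall d) :
    -f ∈ lipschitzUnitBall d := fun t₁ t₂ => by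
  simpa only [Pi.neg_apply, neg_sub_neg, abs_sub_comm] using hf t₁ t₂

theorem lipschitzConst_le_gauge {L : ℝ} (hL : 0 < L) {f : K → ℝ}
    (hf : HasLipschitzBound d L f) :
    lipschitzConst d f ≤ gauge (lipschitzUnitBall d) f := by
  rw [gauge_def]
  refine csInf_le_csInf ⟨0, fun _ hL => hL.1⟩ ⟨L, hL, (mem_smul_lipschitzUnitBall_iff hL).2 hf⟩ ?_
  rintro r ⟨hr, hf⟩
  exact ⟨le_of_lt hr, (mem_smul_lipschitzUnitBall_iff hr).1 hf⟩

end LipschitzBound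

theorem isMeagre_setOf_hasLipschitzBound_or_lipschitzConst_le {K E : Type*}
    [NormedAddCommGroup E] [NormedSpace ℝ E] {d : K → K → ℝ} (hd : ∀ t₁ t₂, 0 ≤ d t₁ t₂)
    (φ : E →L[ℝ] K → ℝ) :
    IsMeagre {x | ∃ L ≥ 0, HasLipschitzBound d L (φ x)} ∨
      ((∀ x, ∃ L ≥ 0, HasLipschitzBound d L (φ x)) ∧
        ∃ lam > 0, ∀ x, lipschitzConst d (φ x) ≤ lam * ‖x‖) := by
  set B := φ ⁻¹' lipschitzUnitBall d
  have mem_smul_iff {c : ℝ} (hc : 0 < c) (x : E) : x ∈ c • B ↔ HasLipschitzBound d c (φ x) := by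
    rw [← hc.ne'.isUnit.preimage_smul_set φ]
    exact mem_smul_lipschitzUnitBall_iff hc
  rcases isMeagre_iUnion_smul_or_mem_nhds_zero
    ((isClosed_lipschitzUnitBall d).preimage φ.continuous)
    ((convex_lipschitzUnitBall d).linear_preimage φ.toLinearMap)
    (fun x hx => by simpa using neg_mem_lipschitzUnitBall d hx)
    (c := fun n : ℕ => (n : ℝ) + 1) (fun n => by positivity) with hmeagre | hB
  · refine .inl <| hmeagre.mono fun x ⟨L, _, hx⟩ => ?_
    obtain ⟨n, hn⟩ := exists_nat_ge L
    exact mem_iUnion.2 ⟨n, (mem_smul_iff (by positivity) x).2 (hx.mono hd (by linarith))⟩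
  · have exists_pos_bound (x : E) : ∃ L > 0, HasLipschitzBound d L (φ x) := by
      obtain ⟨L, hL, hx⟩ := (absorbent_nhds_zero hB).gauge_set_nonempty (x := x)
      exact ⟨L, hL, (mem_smul_iff hL x).1 hx⟩
    obtain ⟨r, hr, hball⟩ := Metric.mem_nhds_iff.1 hB
    refine .inr ⟨fun x => ?_, r⁻¹, inv_pos.2 hr, fun x => ?_⟩
    · obtain ⟨L, hL, hx⟩ := exists_pos_bound x
      exact ⟨L, hL.le, hx⟩
    · obtain ⟨L, hL, hx⟩ := exists_pos_bound x
      calc lipschitzConst d (φ x) ≤ gauge (lipschitzUnitBall d) (φ x) :=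
            lipschitzConst_le_gauge d hL hx
        _ = gauge B x := (gauge_preimage φ.toLinearMap _ x).symm
        _ ≤ r⁻¹ * ‖x‖ := by
          rw [inv_mul_eq_div, le_div_iff₀' hr]
          exact mul_gauge_le_norm hball

theorem lipschitz_subset_meager_or_all_lipschitz_general
    {K : Type*} [TopologicalSpace K] [CompactSpace K]
    (d : K → K → ℝ)
    (hd_nonneg : ∀ x y, 0 ≤ d x y)
    (X : Submodule ℝ C(K, ℝ)) :
    IsMeagre {f : X | ∃ L ≥ 0, ∀ t₁ t₂ : K, |(f : C(K, ℝ)) t₁ - (f : C(K, ℝ)) t₂| ≤ L * d t₁ t₂} ∨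
    ((∀ f ∈ X, ∃ L ≥ 0, ∀ t₁ t₂ : K, |f t₁ - f t₂| ≤ L * d t₁ t₂) ∧
      ∃ lam > 0, ∀ f ∈ X,
        sInf {L : ℝ | 0 ≤ L ∧ ∀ t₁ t₂ : K, |f t₁ - f t₂| ≤ L * d t₁ t₂} ≤ lam * ‖f‖) := by
  rcases isMeagre_setOf_hasLipschitzBound_or_lipschitzConst_le (E := X) hd_nonneg
    (.pi fun t => (ContinuousMap.evalCLM ℝ t).comp X.subtypeL) with hmeagre | ⟨hlip, lam, hlam, hle⟩
  · exact .inl hmeagre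
  · exact .inr ⟨fun f hf => hlip ⟨f, hf⟩, lam, hlam, fun f hf => hle ⟨f, hf⟩⟩

/-- Let `X` be a nonzero closed linear subspace of `C(K)`. Then either the
set of `d`-Lipschitz members of `X` is meager in `X`, or every element of `X` is
`d`-Lipschitz and there is `λ > 0` with `L(f) ≤ λ‖f‖∞` for all `f ∈ X`, where `L(f)` is
the least Lipschitz constant of `f`. -/
theorem lipschitz_subset_meager_or_all_lipschitz
    {K : Type*} [TopologicalSpace K] [CompactSpace K] [T2Space K]
    (d : K → K → ℝ)
    (hd_nonneg : ∀ x y, 0 ≤ d x y)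
    (hd_symm : ∀ x y, d x y = d y x)
    (hd_eq : ∀ x y, d x y = 0 ↔ x = y)
    (hd_tri : ∀ x y z, d x z ≤ d x y + d y z)
    (hd_lsc : LowerSemicontinuous fun p : K × K => d p.1 p.2)
    (X : Submodule ℝ C(K, ℝ)) (hXclosed : IsClosed (X : Set C(K, ℝ))) (hX : X ≠ ⊥) :
    IsMeagre {f : X | ∃ L ≥ 0, ∀ t₁ t₂ : K, |(f : C(K, ℝ)) t₁ - (f : C(K, ℝ)) t₂| ≤ L * d t₁ t₂} ∨
    ((∀ f ∈ X, ∃ L ≥ 0, ∀ t₁ t₂ : K, |f t₁ - f t₂| ≤ L * d t₁ t₂) ∧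
      ∃ lam > 0, ∀ f ∈ X,
        sInf {L : ℝ | 0 ≤ L ∧ ∀ t₁ t₂ : K, |f t₁ - f t₂| ≤ L * d t₁ t₂} ≤ lam * ‖f‖) :=
  lipschitz_subset_meager_or_all_lipschitz_general d hd_nonneg X
end

section
/- Let X and Y be real Banach spaces and let J : X → Y be a bounded linear operator with ‖J‖ ≤ 1. Then J is an isometric embedding (‖Jx‖ = ‖x‖ for all x ∈ X) if and only if Ext(B_{X*}) ⊆ J*(Ext(B_{Y*})), where J* : Y* → X* is the adjoint operator. -/
/-!
The adjoint `J*` maps `B_{Y*}` into `B_{X*}`, and `J` is an isometry iff `J*(B_{Y*}) = B_{X*}`: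
Hahn–Banach extends functionals through an isometry without increasing their norm, and
conversely lifting a norming functional of `x` gives `‖x‖ ≤ ‖J x‖`. For the weak-* topology the
dual balls are compact convex (Banach–Alaoglu) and `J*` is continuous. So if `J*(Ext B_{Y*})`
contains `Ext B_{X*}`, the compact convex set `J*(B_{Y*})` contains `B_{X*}` by Krein–Milman;
and if `J*(B_{Y*}) = B_{X*}`, an extreme point of `B_{X*}` has a compact fibre which is a face
of `B_{Y*}`, and an extreme point of that fibre is an extreme preimage.
-/

open Set Metric

section KreinMilman

variable {E F : Type*} [AddCommGroup E] [Module ℝ E] [TopologicalSpace E] [T2Space E]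
  [IsTopologicalAddGroup E] [ContinuousSMul ℝ E] [LocallyConvexSpace ℝ E]
  [AddCommGroup F] [Module ℝ F] [TopologicalSpace F] [T2Space F]
  [IsTopologicalAddGroup F] [ContinuousSMul ℝ F] [LocallyConvexSpace ℝ F]

theorem IsCompact.subset_of_extremePoints_subset {K C : Set F} (hK : IsCompact K)
    (hKc : Convex ℝ K) (hC : IsClosed C) (hCc : Convex ℝ C) (h : extremePoints ℝ K ⊆ C) :
    K ⊆ C := by
  rw [← closure_convexHull_extremePoints hK hKc]
  exact closure_minimal (convexHull_min h hCc) hC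

theorem subset_image_iff_extremePoints_subset_image (f : E →ᴬ[ℝ] F) {K : Set E} {L : Set F}
    (hK : IsCompact K) (hKc : Convex ℝ K) (hL : IsCompact L) (hLc : Convex ℝ L)
    (hKL : MapsTo f K L) :
    L ⊆ f '' K ↔ extremePoints ℝ L ⊆ f '' extremePoints ℝ K := by
  constructor
  · intro hLK
    have hfK : f '' K = L := hKL.image_subset.antisymm hLK
    rw [← hfK]
    exact surjOn_extremePoints_image f hK
  · intro h
    have hfK : IsCompact (f '' K) := hK.image f.continuous
    exact hL.subset_of_extremePoints_subset hLc hfK.isClosed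
      (hKc.affine_image f.toAffineMap) (h.trans (image_mono extremePoints_subset))

end KreinMilman

namespace ContinuousLinearMap

variable {𝕜 X Y : Type*} [RCLike 𝕜] [NormedAddCommGroup X] [NormedSpace 𝕜 X]
  [NormedAddCommGroup Y] [NormedSpace 𝕜 Y] {J : X →L[𝕜] Y}

theorem mapsTo_comp_closedBall (hJ : ‖J‖ ≤ 1) :
    MapsTo (fun ψ : StrongDual 𝕜 Y => ψ.comp J) (closedBall 0 1) (closedBall 0 1) := by
  intro ψ hψ
  rw [mem_closedBall_zero_iff] at hψ ⊢
  calc ‖ψ.comp J‖ ≤ ‖ψ‖ * ‖J‖ := ψ.opNorm_comp_le J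
    _ ≤ 1 := mul_le_one₀ hψ (norm_nonneg J) hJ

theorem exists_comp_eq_norm_eq_of_isometry (hJ : ∀ x, ‖J x‖ = ‖x‖) (φ : StrongDual 𝕜 X) :
    ∃ ψ : StrongDual 𝕜 Y, ψ.comp J = φ ∧ ‖ψ‖ = ‖φ‖ := by
  let e := (LinearIsometry.mk (J : X →ₗ[𝕜] Y) hJ).equivRange
  obtain ⟨ψ, hψ, hψφ⟩ := exists_extension_norm_eq _
    (φ.comp e.symm.toContinuousLinearEquiv.toContinuousLinearMap)
  refine ⟨ψ, ext fun x => (hψ (e x)).trans (congrArg φ (e.symm_apply_apply x)), ?_⟩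
  simpa [hψφ] using φ.opNorm_comp_linearIsometryEquiv e.symm

theorem closedBall_subset_image_comp_of_isometry (hJ : ∀ x, ‖J x‖ = ‖x‖) :
    closedBall (0 : StrongDual 𝕜 X) 1 ⊆ (fun ψ : StrongDual 𝕜 Y => ψ.comp J) '' closedBall 0 1 := by
  intro φ hφ
  obtain ⟨ψ, hψφ, hψ⟩ := exists_comp_eq_norm_eq_of_isometry hJ φ
  exact ⟨ψ, by rwa [mem_closedBall_zero_iff, hψ, ← mem_closedBall_zero_iff], hψφ⟩

theorem norm_le_norm_apply_of_closedBall_subset_image_comp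
    (h : closedBall (0 : StrongDual 𝕜 X) 1 ⊆ (fun ψ : StrongDual 𝕜 Y => ψ.comp J) '' closedBall 0 1)
    (x : X) : ‖x‖ ≤ ‖J x‖ := by
  obtain ⟨φ, hφ, hφx⟩ := exists_dual_vector'' 𝕜 x
  obtain ⟨ψ, hψ, rfl⟩ := h (mem_closedBall_zero_iff.2 hφ)
  calc ‖x‖ = ‖ψ (J x)‖ := by simp [← comp_apply, hφx]
    _ ≤ ‖ψ‖ * ‖J x‖ := ψ.le_opNorm _
    _ ≤ ‖J x‖ := mul_le_of_le_one_left (norm_nonneg _) (mem_closedBall_zero_iff.1 hψ)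

end ContinuousLinearMap

namespace WeakDual

section dualMap

variable {𝕜 E F : Type*} [CommSemiring 𝕜] [TopologicalSpace 𝕜] [ContinuousAdd 𝕜]
  [ContinuousConstSMul 𝕜 𝕜] [AddCommMonoid E] [Module 𝕜 E] [TopologicalSpace E]
  [AddCommMonoid F] [Module 𝕜 F] [TopologicalSpace F]

noncomputable def dualMap (J : E →L[𝕜] F) : WeakDual 𝕜 F →L[𝕜] WeakDual 𝕜 E where
  toFun ψ := StrongDual.toWeakDual ((toStrongDual ψ).comp J)
  map_add' _ _ := rfl
  map_smul' _ _ := rfl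
  cont := continuous_of_continuous_eval fun x => eval_continuous (J x)

end dualMap

instance instLocallyConvexSpace {E : Type*} [AddCommGroup E] [Module ℝ E] [TopologicalSpace E] :
    LocallyConvexSpace ℝ (WeakDual ℝ E) :=
  WeakBilin.locallyConvexSpace

variable {X Y : Type*} [NormedAddCommGroup X] [NormedSpace ℝ X]
  [NormedAddCommGroup Y] [NormedSpace ℝ Y]

theorem convex_closedBall (x' : StrongDual ℝ X) (r : ℝ) :
    Convex ℝ (toStrongDual ⁻¹' closedBall x' r) :=
  (_root_.convex_closedBall x' r).linear_preimage (toStrongDual : WeakDual ℝ X ≃ₗ[ℝ] _).toLinearMap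

/-- `WeakDual ℝ X` is a type synonym for `StrongDual ℝ X`, and its unit ball is the norm unit
ball, so the weak-* statement is literally the one about the norm dual. -/
theorem closedBall_subset_image_comp_iff_extremePoints {J : X →L[ℝ] Y} (hJ : ‖J‖ ≤ 1) :
    closedBall (0 : StrongDual ℝ X) 1 ⊆ (fun ψ : StrongDual ℝ Y => ψ.comp J) '' closedBall 0 1 ↔
      extremePoints ℝ (closedBall (0 : StrongDual ℝ X) 1) ⊆
        (fun ψ : StrongDual ℝ Y => ψ.comp J) '' extremePoints ℝ (closedBall 0 1) :=
  subset_image_iff_extremePoints_subset_image (dualMap J).toContinuousAffineMap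
    (isCompact_closedBall 0 1) (convex_closedBall 0 1) (isCompact_closedBall 0 1)
    (convex_closedBall 0 1) (ContinuousLinearMap.mapsTo_comp_closedBall hJ)

end WeakDual

theorem isometric_embedding_iff_extreme_points_general
    {X Y : Type*} [NormedAddCommGroup X] [NormedSpace ℝ X]
    [NormedAddCommGroup Y] [NormedSpace ℝ Y]
    (J : X →L[ℝ] Y) (hJ : ‖J‖ ≤ 1) :
    (∀ x : X, ‖J x‖ = ‖x‖) ↔
      Set.extremePoints ℝ (Metric.closedBall (0 : StrongDual ℝ X) 1) ⊆
        (fun ψ : StrongDual ℝ Y => (ψ.comp J : StrongDual ℝ X)) ''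
          Set.extremePoints ℝ (Metric.closedBall (0 : StrongDual ℝ Y) 1) := by
  rw [← WeakDual.closedBall_subset_image_comp_iff_extremePoints hJ]
  refine ⟨J.closedBall_subset_image_comp_of_isometry, fun h x => ?_⟩
  have hle : ‖J x‖ ≤ ‖x‖ := (J.le_of_opNorm_le hJ x).trans_eq (one_mul _)
  exact hle.antisymm (J.norm_le_norm_apply_of_closedBall_subset_image_comp h x)

/-- Let `J : X → Y` be a bounded linear operator with `‖J‖ ≤ 1` between
real Banach spaces. Then `J` is an isometric embedding iff
`Ext(B_{X*}) ⊆ J*(Ext(B_{Y*}))`, where `J*` is the adjoint operator. -/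
theorem isometric_embedding_iff_extreme_points
    {X Y : Type*} [NormedAddCommGroup X] [NormedSpace ℝ X] [CompleteSpace X]
    [NormedAddCommGroup Y] [NormedSpace ℝ Y] [CompleteSpace Y]
    (J : X →L[ℝ] Y) (hJ : ‖J‖ ≤ 1) :
    (∀ x : X, ‖J x‖ = ‖x‖) ↔
      Set.extremePoints ℝ (Metric.closedBall (0 : StrongDual ℝ X) 1) ⊆
        (fun ψ : StrongDual ℝ Y => (ψ.comp J : StrongDual ℝ X)) ''
          Set.extremePoints ℝ (Metric.closedBall (0 : StrongDual ℝ Y) 1) :=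
  isometric_embedding_iff_extreme_points_general J hJ
end

section
/- Let X be a real Banach space which is Gâteaux smooth in the sense that for every x ∈ X with ‖x‖ = 1 there is a unique x* ∈ X* with ‖x*‖ = 1 and x*(x) = 1, and let J : X → C(K) be a linear isometric embedding, where K is a compact Hausdorff space. Let J*(K) = {x* ∈ X* : there is t ∈ K with x*(x) = (Jx)(t) for all x ∈ X}. Then the unit sphere S_{X*} is contained in J*(K) ∪ (−J*(K)). Moreover, if X is infinite-dimensional, then B_{X*} = J*(K) ∪ (−J*(K)). -/
/-!
Ekeland's variational principle on the unit ball, followed by a Hahn–Banach argument over the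
cone spanned by the ball at the quasi-maximiser (the Bishop–Phelps argument), shows that every
norm-one functional is a norm limit of norm-one functionals attaining their norm at a unit vector.
The functionals `±J*δ_t` form a weak*-compact norming set, since `‖J x‖` is attained at some
`t ∈ K`; Gâteaux smoothness at the norming vector therefore forces every norm-attaining
functional to be of this form, and norm-closedness gives the whole sphere. In infinite dimension
every point of the dual ball is a weak* limit of points of the sphere (move along a functional
vanishing at finitely many given vectors), so weak*-compactness gives the whole ball.
-/

open Metric Set Filter Topology

theorem exists_forall_le_add_mul_dist {α : Type*} [MetricSpace α] [CompleteSpace α] [Nonempty α]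
    {f : α → ℝ} (hf : Continuous f) (hbdd : BddAbove (range f)) {ε : ℝ} (hε : 0 < ε) :
    ∃ x₀, ∀ x, f x ≤ f x₀ + ε * dist x x₀ := by
  set S : α → Set α := fun a => {x | f a + ε * dist x a ≤ f x}
  have self_mem (a : α) : a ∈ S a := by simp [S]
  have mem_trans {a b x : α} (hb : b ∈ S a) (hx : x ∈ S b) : x ∈ S a := by
    simp only [S, mem_ofPred_eq] at *
    nlinarith [mul_le_mul_of_nonneg_left (dist_triangle x b a) hε.le]
  have isClosed_S (a : α) : IsClosed (S a) := isClosed_le (by fun_prop) hf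
  have step (n : ℕ) (a : α) : ∃ b ∈ S a, sSup (f '' S a) - ε / (n + 1) < f b := by
    obtain ⟨_, ⟨b, hb, rfl⟩, hlt⟩ :=
      exists_lt_of_lt_csSup (Set.Nonempty.image f ⟨a, self_mem a⟩)
        (sub_lt_self (sSup (f '' S a)) (by positivity : 0 < ε / (n + 1)))
    exact ⟨b, hb, hlt⟩
  choose next next_mem lt_next using step
  let u : ℕ → α := fun n => Nat.rec (Classical.arbitrary α) next n
  have u_mem {m n : ℕ} (hmn : m ≤ n) : u n ∈ S (u m) := by
    induction hmn with
    | refl => exact self_mem _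
    | step _ ih => exact mem_trans ih (next_mem _ _)
  -- the choice of `u (n + 1)` confines `S (u (n + 1))` to a ball of radius `1 / (n + 1)`
  have dist_le (n : ℕ) {x : α} (hx : x ∈ S (u (n + 1))) : dist x (u (n + 1)) ≤ 1 / (n + 1) := by
    have h₁ : f x ≤ sSup (f '' S (u n)) :=
      le_csSup (hbdd.mono (image_subset_range _ _)) ⟨x, mem_trans (next_mem n (u n)) hx, rfl⟩
    have h₂ : sSup (f '' S (u n)) - ε / (n + 1) < f (u (n + 1)) := lt_next n (u n)
    have h₃ : f (u (n + 1)) + ε * dist x (u (n + 1)) ≤ f x := hx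
    refine le_of_mul_le_mul_left ?_ hε
    rw [mul_one_div]
    linarith
  have tendsto_of_mem {y : α} (hy : ∀ n, y ∈ S (u n)) : Tendsto u atTop (𝓝 y) := by
    rw [tendsto_iff_dist_tendsto_zero, ← tendsto_add_atTop_iff_nat 1]
    refine squeeze_zero (fun _ => dist_nonneg) (fun n => ?_) tendsto_one_div_add_atTop_nhds_zero_nat
    rw [dist_comm]
    exact dist_le n (hy (n + 1))
  have cauchy : CauchySeq u := by
    refine Metric.cauchySeq_iff'.2 fun δ hδ => ?_
    obtain ⟨N, hN⟩ := exists_nat_one_div_lt hδ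
    exact ⟨N + 1, fun n hn => (dist_le N (u_mem hn)).trans_lt hN⟩
  obtain ⟨x₀, hx₀⟩ := cauchySeq_tendsto_of_complete cauchy
  have x₀_mem (n : ℕ) : x₀ ∈ S (u n) :=
    (isClosed_S _).mem_of_tendsto hx₀ (eventually_atTop.2 ⟨n, fun _ => u_mem⟩)
  refine ⟨x₀, fun x => ?_⟩
  by_contra! hx
  obtain rfl := tendsto_nhds_unique (tendsto_of_mem fun n => mem_trans (x₀_mem n) hx.le) hx₀
  simp at hx

theorem PointedCone.exists_linearMap_le_sublinear_nonpos {E : Type*} [AddCommGroup E]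
    [Module ℝ E] (C : PointedCone ℝ E) {q : E → ℝ}
    (q_hom : ∀ c : ℝ, 0 < c → ∀ x, q (c • x) = c * q x) (q_add : ∀ x y, q (x + y) ≤ q x + q y)
    (hC : ∀ c ∈ C, 0 ≤ q (-c)) :
    ∃ g : E →ₗ[ℝ] ℝ, (∀ x, g x ≤ q x) ∧ ∀ c ∈ C, g c ≤ 0 := by
  have q_zero : q 0 = 0 := by grind [q_hom 2 (by norm_num) 0, smul_zero]
  -- the epigraph of the infimal convolution of `q` with the indicator of `C`
  let s : PointedCone ℝ (E × ℝ) :=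
    { carrier := {p | ∃ c ∈ C, q (p.1 - c) ≤ p.2}
      zero_mem' := ⟨0, C.zero_mem, by simp [q_zero]⟩
      add_mem' := by
        rintro ⟨x, y⟩ ⟨x', y'⟩ ⟨c, hc, h⟩ ⟨c', hc', h'⟩
        refine ⟨c + c', C.add_mem hc hc', ?_⟩
        calc q (x + x' - (c + c')) = q ((x - c) + (x' - c')) := by congr 1; abel
          _ ≤ y + y' := (q_add _ _).trans (add_le_add h h')
      smul_mem' := by
        rintro r ⟨x, y⟩ ⟨c, hc, h⟩
        refine ⟨r • c, C.smul_mem r.2 hc, ?_⟩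
        obtain ⟨r, hr⟩ := r
        rcases hr.eq_or_lt with rfl | hr
        · simp [q_zero]
        · simpa [← smul_sub, q_hom r hr] using mul_le_mul_of_nonneg_left h hr.le }
  let f : (E × ℝ) →ₗ.[ℝ] ℝ := (LinearMap.snd ℝ E ℝ).toPMap (LinearMap.range (LinearMap.inr ℝ E ℝ))
  have f_nonneg : ∀ p : f.domain, (p : E × ℝ) ∈ s → 0 ≤ f p := by
    rintro ⟨_, t, rfl⟩ ⟨c, hc, h⟩
    simp only [LinearMap.coe_inr, zero_sub] at h ⊢
    exact (hC c hc).trans h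
  have f_dense : ∀ p, ∃ d : f.domain, (d : E × ℝ) + p ∈ s := fun ⟨x, y⟩ =>
    ⟨⟨(0, q x - y), q x - y, rfl⟩, 0, C.zero_mem, by simp⟩
  obtain ⟨G, G_eq, G_nonneg⟩ := riesz_extension s f f_nonneg f_dense
  have G_inr (t : ℝ) : G (0, t) = t := G_eq ⟨(0, t), t, rfl⟩
  refine ⟨-G.comp (LinearMap.inl ℝ E ℝ), fun x => ?_, fun c hc => ?_⟩
  · have h := G_nonneg (x, q x) ⟨0, C.zero_mem, by simp⟩
    have hx : (x, q x) = (x, 0) + (0, q x) := by simp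
    rw [hx, map_add, G_inr] at h
    simp only [LinearMap.neg_apply, LinearMap.comp_apply, LinearMap.inl_apply]
    linarith
  · simpa using G_nonneg (c, 0) ⟨c, hc, by simp [q_zero]⟩

section Dual

variable {X : Type*} [NormedAddCommGroup X] [NormedSpace ℝ X]

theorem exists_dual_isMaxOn_near {s : Set X} (hs : Convex ℝ s) {x₀ : X} (hx₀ : x₀ ∈ s)
    {φ : StrongDual ℝ X} {ε : ℝ} (hε : 0 ≤ ε) (hφ : ∀ x ∈ s, φ x ≤ φ x₀ + ε * ‖x - x₀‖) :
    ∃ η : StrongDual ℝ X, ‖η - φ‖ ≤ ε ∧ IsMaxOn η s x₀ := by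
  have mem_C (c : X) : c ∈ ConvexCone.hull ℝ ((fun x => -x₀ + x) '' s) ↔
      ∃ r : ℝ, 0 < r ∧ ∃ x ∈ s, r • (x - x₀) = c := by
    rw [ConvexCone.mem_hull_of_convex (hs.translate _)]
    simp [Set.mem_smul_set, neg_add_eq_sub]
  let C : PointedCone ℝ X :=
    (ConvexCone.hull ℝ _).toPointedCone ((mem_C 0).2 ⟨1, one_pos, x₀, hx₀, by simp⟩)
  have hqC (c : X) (hc : c ∈ C) : 0 ≤ ε * ‖-c‖ + φ (-c) := by
    obtain ⟨r, hr, x, hx, rfl⟩ := (mem_C c).1 hc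
    have h := mul_le_mul_of_nonneg_left (hφ x hx) hr.le
    simp only [norm_neg, map_neg, map_smul, map_sub, smul_eq_mul, norm_smul,
      Real.norm_eq_abs, abs_of_pos hr]
    nlinarith
  obtain ⟨g, g_le, g_C⟩ := C.exists_linearMap_le_sublinear_nonpos (q := fun z => ε * ‖z‖ + φ z)
    (fun r hr z => by simp only [norm_smul, map_smul, smul_eq_mul, Real.norm_eq_abs,
      abs_of_pos hr]; ring)
    (fun x y => by simp only [map_add]; nlinarith [norm_add_le x y]) hqC
  have g_sub (z : X) : |g z - φ z| ≤ ε * ‖z‖ := by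
    have := g_le (-z)
    simp only [map_neg, norm_neg] at this
    exact abs_le.2 ⟨by linarith, by linarith [g_le z]⟩
  let δ : StrongDual ℝ X := (g - φ.toLinearMap).mkContinuous ε fun z => by simpa using g_sub z
  have hδ (z : X) : (φ + δ) z = g z := by simp [δ]
  refine ⟨φ + δ, by simpa using LinearMap.mkContinuous_norm_le _ hε _, fun x hx => ?_⟩
  show (φ + δ) x ≤ (φ + δ) x₀
  have h := g_C (x - x₀) ((mem_C _).2 ⟨1, one_pos, x, hx, one_smul _ _⟩)
  rw [map_sub] at h
  rw [hδ, hδ]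
  linarith

theorem apply_eq_norm_of_isMaxOn_closedBall {η : StrongDual ℝ X} {x₀ : X}
    (hx₀ : x₀ ∈ closedBall 0 1) (h : IsMaxOn η (closedBall 0 1) x₀) : η x₀ = ‖η‖ := by
  have hmax (x : X) (hx : ‖x‖ ≤ 1) : η x ≤ η x₀ := h (mem_closedBall_zero_iff.2 hx)
  apply le_antisymm
  · calc η x₀ ≤ ‖η‖ * ‖x₀‖ := (le_abs_self _).trans (η.le_opNorm x₀)
      _ ≤ ‖η‖ := mul_le_of_le_one_right (norm_nonneg _) (mem_closedBall_zero_iff.1 hx₀)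
  · refine ContinuousLinearMap.opNorm_le_of_unit_norm (by simpa using hmax 0 (by simp))
      fun x hx => ?_
    rw [Real.norm_eq_abs, abs_le]
    exact ⟨neg_le.1 (by simpa using hmax (-x) (by simp [hx])), hmax x hx.le⟩

theorem exists_isMaxOn_closedBall_near [CompleteSpace X] (φ : StrongDual ℝ X) {ε : ℝ}
    (hε : 0 < ε) : ∃ x₀ ∈ closedBall (0 : X) 1, ∃ η : StrongDual ℝ X,
      ‖η - φ‖ ≤ ε ∧ IsMaxOn η (closedBall 0 1) x₀ := by
  have : CompleteSpace (closedBall (0 : X) 1) := isClosed_closedBall.completeSpace_coe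
  have : Nonempty (closedBall (0 : X) 1) := ⟨⟨0, by simp⟩⟩
  have hbdd : BddAbove (range fun x : closedBall (0 : X) 1 => φ x) := by
    refine ⟨‖φ‖, ?_⟩
    rintro _ ⟨x, rfl⟩
    exact (le_abs_self _).trans ((φ.le_opNorm x).trans
      (mul_le_of_le_one_right (norm_nonneg _) (mem_closedBall_zero_iff.1 x.2)))
  obtain ⟨x₀, hx₀⟩ := exists_forall_le_add_mul_dist (by fun_prop) hbdd hε
  exact ⟨x₀, x₀.2, exists_dual_isMaxOn_near (convex_closedBall 0 1) x₀.2 hε.le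
    fun x hx => by simpa [Subtype.dist_eq, dist_eq_norm] using hx₀ ⟨x, hx⟩⟩

theorem sphere_subset_closure_normAttaining [CompleteSpace X] :
    sphere (0 : StrongDual ℝ X) 1 ⊆ closure {ψ | ‖ψ‖ = 1 ∧ ∃ x : X, ‖x‖ = 1 ∧ ψ x = 1} := by
  intro φ hφ
  rw [mem_sphere_zero_iff_norm] at hφ
  refine Metric.mem_closure_iff.2 fun r hr => ?_
  set ε := min (r / 4) (1 / 2)
  obtain ⟨x₀, hx₀, η, hηφ, hη⟩ := exists_isMaxOn_closedBall_near φ (by positivity : 0 < ε)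
  have hη_eq : η x₀ = ‖η‖ := apply_eq_norm_of_isMaxOn_closedBall hx₀ hη
  have hη_norm : |‖η‖ - 1| ≤ ε := hφ ▸ (abs_norm_sub_norm_le η φ).trans hηφ
  have hη_pos : 0 < ‖η‖ := by linarith [(abs_le.1 hη_norm).1, min_le_right (r / 4) (1 / 2)]
  have hx₀_norm : ‖x₀‖ = 1 := by
    refine le_antisymm (mem_closedBall_zero_iff.1 hx₀) (le_of_mul_le_mul_left ?_ hη_pos)
    calc ‖η‖ * 1 = η x₀ := by rw [mul_one, hη_eq]
      _ ≤ ‖η‖ * ‖x₀‖ := (le_abs_self _).trans (η.le_opNorm x₀)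
  set ψ := ‖η‖⁻¹ • η
  have hψ : ‖ψ‖ = 1 := by simp [ψ, norm_smul, hη_pos.ne']
  have hηψ : η - ψ = (‖η‖ - 1) • ψ := by
    ext x
    simp only [sub_apply, smul_apply, smul_eq_mul, ψ]
    field_simp
  refine ⟨ψ, ⟨hψ, x₀, hx₀_norm, by simp [ψ, hη_eq, hη_pos.ne']⟩, ?_⟩
  calc dist φ ψ ≤ ‖φ - η‖ + ‖η - ψ‖ := by
        rw [dist_eq_norm]; exact norm_sub_le_norm_sub_add_norm_sub _ _ _
    _ ≤ ε + ε := by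
      rw [norm_sub_rev, hηψ, norm_smul, hψ, mul_one, Real.norm_eq_abs]
      exact add_le_add hηφ hη_norm
    _ < r := by linarith [min_le_left (r / 4) (1 / 2)]

theorem mem_of_existsUnique_of_norming {D : Set (StrongDual ℝ X)} (hD : ∀ χ ∈ D, ‖χ‖ ≤ 1)
    {x : X} (hx : ‖x‖ = 1) (hDx : ∃ χ ∈ D, χ x = 1)
    (huniq : ∃! f : StrongDual ℝ X, ‖f‖ = 1 ∧ f x = 1) {ψ : StrongDual ℝ X} (hψ : ‖ψ‖ = 1)
    (hψx : ψ x = 1) : ψ ∈ D := by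
  obtain ⟨χ, hχD, hχx⟩ := hDx
  have hχ : ‖χ‖ = 1 := (hD χ hχD).antisymm (by simpa [hχx, hx] using χ.le_opNorm x)
  rwa [huniq.unique ⟨hψ, hψx⟩ ⟨hχ, hχx⟩]

end Dual

theorem ContinuousMap.exists_norm_apply_eq_norm {K E : Type*} [TopologicalSpace K] [CompactSpace K]
    [Nonempty K] [NormedAddCommGroup E] (f : C(K, E)) : ∃ t, ‖f t‖ = ‖f‖ := by
  by_contra! h
  exact lt_irrefl _ (f.norm_lt_iff_of_nonempty.2 fun t => (f.norm_coe_le_norm t).lt_of_ne (h t))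

section Embedding

variable {X : Type*} [NormedAddCommGroup X] [NormedSpace ℝ X] {K : Type*} [TopologicalSpace K]

noncomputable def adjointDirac (J : X →L[ℝ] C(K, ℝ)) (t : K) : StrongDual ℝ X :=
  (ContinuousMap.evalCLM ℝ t).comp J

@[simp]
theorem adjointDirac_apply (J : X →L[ℝ] C(K, ℝ)) (t : K) (x : X) : adjointDirac J t x = J x t :=
  rfl

def adjointImage (J : X →L[ℝ] C(K, ℝ)) : Set (StrongDual ℝ X) := range (adjointDirac J)

theorem setOf_forall_apply_eq_eq_adjointImage (J : X →L[ℝ] C(K, ℝ)) :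
    {φ : StrongDual ℝ X | ∃ t : K, ∀ x : X, φ x = J x t} = adjointImage J := by
  ext φ
  simp [adjointImage, ContinuousLinearMap.ext_iff, eq_comm]

theorem norm_le_one_of_mem_adjointImage_union_neg [CompactSpace K] {J : X →L[ℝ] C(K, ℝ)}
    (hJ : ∀ x, ‖J x‖ ≤ ‖x‖) {φ : StrongDual ℝ X} (hφ : φ ∈ adjointImage J ∪ -adjointImage J) :
    ‖φ‖ ≤ 1 := by
  have h (t : K) : ‖adjointDirac J t‖ ≤ 1 :=
    ContinuousLinearMap.opNorm_le_bound _ zero_le_one fun x => by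
      simpa using ((J x).norm_coe_le_norm t).trans (hJ x)
  rcases hφ with ⟨t, rfl⟩ | ⟨t, ht⟩
  · exact h t
  · simpa [ht] using h t

theorem exists_mem_adjointImage_union_neg_apply_eq_one [CompactSpace K] {J : X →L[ℝ] C(K, ℝ)}
    (hJ : ∀ x, ‖J x‖ = ‖x‖) {x : X} (hx : ‖x‖ = 1) :
    ∃ χ ∈ adjointImage J ∪ -adjointImage J, χ x = 1 := by
  obtain ⟨t₀, -⟩ := DFunLike.ne_iff.1 (norm_ne_zero_iff.1 (by simp [hJ, hx]) : J x ≠ 0)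
  have : Nonempty K := ⟨t₀⟩
  obtain ⟨t, ht⟩ := (J x).exists_norm_apply_eq_norm
  rw [hJ, hx, Real.norm_eq_abs] at ht
  rcases (abs_eq zero_le_one).1 ht with h | h
  · exact ⟨adjointDirac J t, Or.inl ⟨t, rfl⟩, h⟩
  · exact ⟨-adjointDirac J t, Or.inr (by simp [adjointImage]), by simp [h]⟩

theorem isCompact_toWeakDual_image_adjointImage_union_neg [CompactSpace K] (J : X →L[ℝ] C(K, ℝ)) :
    IsCompact (StrongDual.toWeakDual '' (adjointImage J ∪ -adjointImage J)) := by
  set w : K → WeakDual ℝ X := fun t => StrongDual.toWeakDual (adjointDirac J t)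
  have hw : Continuous w := WeakDual.continuous_of_continuous_eval fun x => (J x).continuous
  have : StrongDual.toWeakDual '' (adjointImage J ∪ -adjointImage J) = range w ∪ -range w := by
    rw [image_union, image_neg, adjointImage, ← range_comp']
  rw [this]
  exact (isCompact_range hw).union (isCompact_range hw).neg

theorem isClosed_adjointImage_union_neg [CompactSpace K] (J : X →L[ℝ] C(K, ℝ)) :
    IsClosed (adjointImage J ∪ -adjointImage J) := by
  rw [← StrongDual.toWeakDual.injective.preimage_image (adjointImage J ∪ -adjointImage J)]
  exact (isCompact_toWeakDual_image_adjointImage_union_neg J).isClosed.preimage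
    NormedSpace.Dual.toWeakDual_continuous

end Embedding

section InfiniteDimensional

variable {X : Type*} [NormedAddCommGroup X] [NormedSpace ℝ X]

theorem exists_dual_ne_zero_forall_mem_eq_zero (hX : ¬FiniteDimensional ℝ X) (F : Finset X) :
    ∃ η : StrongDual ℝ X, η ≠ 0 ∧ ∀ x ∈ F, η x = 0 := by
  let T : StrongDual ℝ X →ₗ[ℝ] F → ℝ :=
    LinearMap.pi fun x => (ContinuousLinearMap.apply ℝ ℝ (x : X)).toLinearMap
  have hT : ¬Function.Injective T := fun hT => hX <| by
    have := FiniteDimensional.of_injective T hT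
    exact FiniteDimensional.of_injective (NormedSpace.inclusionInDoubleDualLi ℝ).toLinearMap
      (NormedSpace.inclusionInDoubleDualLi ℝ).injective
  obtain ⟨η, hη, hη0⟩ : ∃ η, T η = 0 ∧ η ≠ 0 := by simpa [injective_iff_map_eq_zero] using hT
  exact ⟨η, hη0, fun x hx => congr_fun hη ⟨x, hx⟩⟩

theorem exists_norm_eq_forall_mem_eq (hX : ¬FiniteDimensional ℝ X) {φ : StrongDual ℝ X} {r : ℝ}
    (hφ : ‖φ‖ ≤ r) (F : Finset X) : ∃ ψ : StrongDual ℝ X, ‖ψ‖ = r ∧ ∀ x ∈ F, ψ x = φ x := by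
  obtain ⟨η, hη, hηF⟩ := exists_dual_ne_zero_forall_mem_eq_zero hX F
  have hη_pos : 0 < ‖η‖ := norm_pos_iff.2 hη
  have hr : 0 ≤ r := (norm_nonneg _).trans hφ
  -- `‖φ + s • η‖` passes from `‖φ‖ ≤ r` at `s = 0` to at least `2 r - ‖φ‖ ≥ r` at `s = 2 r / ‖η‖`
  have hle : r ≤ ‖φ + (2 * r / ‖η‖) • η‖ := by
    have h := norm_sub_norm_le ((2 * r / ‖η‖) • η) (-φ)
    rw [norm_smul, Real.norm_eq_abs, abs_of_nonneg (by positivity), div_mul_cancel₀ _ hη_pos.ne',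
      norm_neg, sub_neg_eq_add, add_comm] at h
    linarith
  obtain ⟨s, -, hs⟩ := intermediate_value_Icc (by positivity : (0 : ℝ) ≤ 2 * r / ‖η‖)
    (by fun_prop : Continuous fun s : ℝ => ‖φ + s • η‖).continuousOn ⟨by simpa using hφ, hle⟩
  exact ⟨φ + s • η, hs, fun x hx => by simp [hηF x hx]⟩

theorem image_closedBall_subset_closure_image_sphere (hX : ¬FiniteDimensional ℝ X) (r : ℝ) :
    StrongDual.toWeakDual '' closedBall (0 : StrongDual ℝ X) r ⊆
      closure (StrongDual.toWeakDual '' sphere 0 r) := by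
  rintro _ ⟨φ, hφ, rfl⟩
  rw [mem_closure_iff_nhds_basis (WeakDual.withSeminorms ℝ X).hasBasis_ball]
  rintro ⟨F, ε⟩ (hε : 0 < ε)
  obtain ⟨ψ, hψ, hψF⟩ := exists_norm_eq_forall_mem_eq hX (mem_closedBall_zero_iff.1 hφ) F
  refine ⟨StrongDual.toWeakDual ψ, ⟨ψ, by simpa using hψ, rfl⟩, ?_⟩
  rw [Seminorm.mem_ball]
  refine (Seminorm.finset_sup_apply_le le_rfl fun x hx => ?_).trans_lt hε
  simp [← map_sub, hψF x hx]

end InfiniteDimensional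

theorem sphere_covered_by_adjoint_image_general
    {K : Type*} [TopologicalSpace K] [CompactSpace K]
    {X : Type*} [NormedAddCommGroup X] [NormedSpace ℝ X] [CompleteSpace X]
    (hsmooth : ∀ x : X, ‖x‖ = 1 →
      ∃! f : StrongDual ℝ X, ‖f‖ = 1 ∧ f x = 1)
    (J : X →L[ℝ] C(K, ℝ)) (hJ : ∀ x : X, ‖J x‖ = ‖x‖) :
    (Metric.sphere (0 : StrongDual ℝ X) 1 ⊆
      {φ : StrongDual ℝ X | ∃ t : K, ∀ x : X, φ x = J x t} ∪
      -{φ : StrongDual ℝ X | ∃ t : K, ∀ x : X, φ x = J x t}) ∧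
    (¬ FiniteDimensional ℝ X →
      Metric.closedBall (0 : StrongDual ℝ X) 1 =
        {φ : StrongDual ℝ X | ∃ t : K, ∀ x : X, φ x = J x t} ∪
        -{φ : StrongDual ℝ X | ∃ t : K, ∀ x : X, φ x = J x t}) := by
  rw [setOf_forall_apply_eq_eq_adjointImage]
  have norm_le_one : ∀ χ ∈ adjointImage J ∪ -adjointImage J, ‖χ‖ ≤ 1 := fun _ =>
    norm_le_one_of_mem_adjointImage_union_neg fun x => (hJ x).le
  have hsphere : sphere (0 : StrongDual ℝ X) 1 ⊆ adjointImage J ∪ -adjointImage J := by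
    refine sphere_subset_closure_normAttaining.trans <|
      closure_minimal ?_ (isClosed_adjointImage_union_neg J)
    rintro ψ ⟨hψ, x, hx, hψx⟩
    exact mem_of_existsUnique_of_norming norm_le_one hx
      (exists_mem_adjointImage_union_neg_apply_eq_one hJ hx) (hsmooth x hx) hψ hψx
  refine ⟨hsphere, fun hX => Subset.antisymm (fun φ hφ => ?_) fun φ hφ => ?_⟩
  · have h := closure_minimal (image_mono hsphere)
      (isCompact_toWeakDual_image_adjointImage_union_neg J).isClosed
      (image_closedBall_subset_closure_image_sphere hX 1 ⟨φ, hφ, rfl⟩)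
    exact StrongDual.toWeakDual.injective.mem_set_image.1 h
  · exact mem_closedBall_zero_iff.2 (norm_le_one φ hφ)

/-- Let `X` be Gâteaux smooth and `J : X → C(K)` a linear isometric
embedding. Then `S_{X*} ⊆ J*(K) ∪ (−J*(K))`; moreover if `X` is infinite-dimensional then
`B_{X*} = J*(K) ∪ (−J*(K))`. -/
theorem sphere_covered_by_adjoint_image
    {K : Type*} [TopologicalSpace K] [CompactSpace K] [T2Space K]
    {X : Type*} [NormedAddCommGroup X] [NormedSpace ℝ X] [CompleteSpace X]
    (hsmooth : ∀ x : X, ‖x‖ = 1 →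
      ∃! f : StrongDual ℝ X, ‖f‖ = 1 ∧ f x = 1)
    (J : X →L[ℝ] C(K, ℝ)) (hJ : ∀ x : X, ‖J x‖ = ‖x‖) :
    (Metric.sphere (0 : StrongDual ℝ X) 1 ⊆
      {φ : StrongDual ℝ X | ∃ t : K, ∀ x : X, φ x = J x t} ∪
      -{φ : StrongDual ℝ X | ∃ t : K, ∀ x : X, φ x = J x t}) ∧
    (¬ FiniteDimensional ℝ X →
      Metric.closedBall (0 : StrongDual ℝ X) 1 =
        {φ : StrongDual ℝ X | ∃ t : K, ∀ x : X, φ x = J x t} ∪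
        -{φ : StrongDual ℝ X | ∃ t : K, ∀ x : X, φ x = J x t}) :=
  sphere_covered_by_adjoint_image_general hsmooth J hJ
end

section
/- Suppose the lower semicontinuous metric d generates the topology of K (d metrizes K). Then every closed linear subspace X of C(K) all of whose elements are d-Lipschitz functions is finite-dimensional. -/
/-!
Since `d` metrizes `K`, `K` is a compact metric space and `X` is a Banach space each of whose
elements is Lipschitz. The sets of `n`-Lipschitz elements of `X` are closed and cover `X`, so by
Baire one of them contains a ball; subtracting its centre, a whole ball around `0` consists of
uniformly Lipschitz functions. By Arzelà–Ascoli that closed ball is compact, so `X` is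
finite-dimensional by Riesz's theorem.
-/

open Metric NNReal Set

theorem exists_forall_mem_ball_lipschitzWith {E α β : Type*} [SeminormedAddCommGroup E]
    [CompleteSpace E] [PseudoEMetricSpace α] [SeminormedAddCommGroup β]
    (T : E →+ (α → β)) (hT : Continuous T) (h : ∀ x, ∃ K, LipschitzWith K (T x)) :
    ∃ K, ∃ r > 0, ∀ x ∈ ball (0 : E) r, LipschitzWith K (T x) := by
  have hclosed (n : ℕ) : IsClosed (T ⁻¹' {f | LipschitzWith n f}) :=
    (isClosed_setOfPred_lipschitzWith _).preimage hT
  have hcover : ⋃ n : ℕ, T ⁻¹' {f | LipschitzWith n f} = univ := by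
    refine eq_univ_of_forall fun x => mem_iUnion.2 ?_
    obtain ⟨K, hK⟩ := h x
    exact ⟨⌈K⌉₊, hK.weaken (Nat.le_ceil K)⟩
  obtain ⟨n, x₀, hx₀⟩ := nonempty_interior_of_iUnion_of_closed hclosed hcover
  obtain ⟨r, hr, hball⟩ := Metric.isOpen_iff.1 isOpen_interior x₀ hx₀
  refine ⟨n + n, r, hr, fun x hx => ?_⟩
  have hsum : x₀ + x ∈ ball x₀ r := by simpa using hx
  have hT₁ : LipschitzWith n (T (x₀ + x)) := interior_subset (hball hsum)
  have hT₀ : LipschitzWith n (T x₀) := interior_subset (hball (mem_ball_self hr))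
  simpa using hT₁.sub hT₀

theorem ContinuousMap.isCompact_of_isClosed_of_equicontinuous {α β : Type*} [TopologicalSpace α]
    [CompactSpace α] [PseudoMetricSpace β] (s : Set β) (hs : IsCompact s) (A : Set C(α, β))
    (hA : IsClosed A) (in_s : ∀ f ∈ A, ∀ x, f x ∈ s) (H : Equicontinuous ((↑) : A → α → β)) :
    IsCompact A := by
  let Φ := ContinuousMap.isometryEquivBoundedOfCompact α β
  have hΦA : IsCompact (Φ.symm ⁻¹' A) :=
    BoundedContinuousFunction.arzela_ascoli₂ s hs _ (hA.preimage Φ.symm.continuous)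
      (fun f x hf => in_s _ hf x) (H.comp (A.restrictPreimage Φ.symm))
  simpa [Φ.symm.surjective.image_preimage] using hΦA.image Φ.symm.continuous

theorem ContinuousMap.isCompact_of_isClosed_of_lipschitzWith {α β : Type*} [PseudoMetricSpace α]
    [CompactSpace α] [SeminormedAddCommGroup β] [ProperSpace β] {S : Set C(α, β)}
    (hS : IsClosed S) {R : ℝ} (hSR : S ⊆ closedBall 0 R) {K : ℝ≥0}
    (hK : ∀ f ∈ S, LipschitzWith K f) : IsCompact S := by
  refine isCompact_of_isClosed_of_equicontinuous (closedBall 0 R) (isCompact_closedBall 0 R) S hS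
    (fun f hf x => ?_) ?_
  · have := hSR hf
    rw [mem_closedBall_zero_iff] at this ⊢
    exact (f.norm_coe_le_norm x).trans this
  · exact (LipschitzWith.uniformEquicontinuous _ K fun f : S => hK f.1 f.2).equicontinuous

theorem lipschitz_subspace_finite_dimensional_of_metrizes_general
    {K : Type*} [TopologicalSpace K] [CompactSpace K]
    (d : K → K → ℝ)
    (hd_symm : ∀ x y, d x y = d y x)
    (hd_eq : ∀ x y, d x y = 0 ↔ x = y)
    (hd_tri : ∀ x y z, d x z ≤ d x y + d y z)
    (hd_metrizes : ∀ U : Set K, IsOpen U ↔ ∀ x ∈ U, ∃ ε > 0, {y : K | d x y < ε} ⊆ U)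
    (X : Submodule ℝ C(K, ℝ)) (hXclosed : IsClosed (X : Set C(K, ℝ)))
    (hXlip : ∀ f ∈ X, ∃ L ≥ 0, ∀ t₁ t₂ : K, |f t₁ - f t₂| ≤ L * d t₁ t₂) :
    FiniteDimensional ℝ X := by
  let : MetricSpace K :=
    .ofDistTopology d (fun x => (hd_eq x x).2 rfl) hd_symm hd_tri hd_metrizes (hd_eq · · |>.1)
  have : CompleteSpace X := hXclosed.completeSpace_coe
  have hlip (f : X) : ∃ L, LipschitzWith L (f : K → ℝ) := by
    obtain ⟨L, hL, hf⟩ := hXlip f f.2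
    exact ⟨⟨L, hL⟩, .of_dist_le_mul fun t₁ t₂ => hf t₁ t₂⟩
  obtain ⟨L, r, hr, hL⟩ := exists_forall_mem_ball_lipschitzWith
    (ContinuousMap.coeFnAddMonoidHom.comp X.subtype.toAddMonoidHom)
    (continuous_coeFun.comp continuous_subtype_val) hlip
  refine FiniteDimensional.of_isCompact_closedBall₀ ℝ (half_pos hr) ?_
  have hball : (↑) '' closedBall (0 : X) (r / 2) = (X : Set C(K, ℝ)) ∩ closedBall 0 (r / 2) := by
    ext f; simp [and_comm]
  rw [Topology.IsEmbedding.subtypeVal.isCompact_iff, hball]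
  refine ContinuousMap.isCompact_of_isClosed_of_lipschitzWith
    (hXclosed.inter isClosed_closedBall) inter_subset_right fun f hf => hL ⟨f, hf.1⟩ ?_
  simpa using hf.2.trans_lt (half_lt_self hr)

/-- If the lower semicontinuous metric `d` generates the topology of `K`,
then every closed linear subspace of `C(K)` consisting of `d`-Lipschitz functions is
finite-dimensional. -/
theorem lipschitz_subspace_finite_dimensional_of_metrizes
    {K : Type*} [TopologicalSpace K] [CompactSpace K] [T2Space K]
    (d : K → K → ℝ)
    (hd_nonneg : ∀ x y, 0 ≤ d x y)
    (hd_symm : ∀ x y, d x y = d y x)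
    (hd_eq : ∀ x y, d x y = 0 ↔ x = y)
    (hd_tri : ∀ x y z, d x z ≤ d x y + d y z)
    (hd_lsc : LowerSemicontinuous fun p : K × K => d p.1 p.2)
    (hd_metrizes : ∀ U : Set K, IsOpen U ↔ ∀ x ∈ U, ∃ ε > 0, {y : K | d x y < ε} ⊆ U)
    (X : Submodule ℝ C(K, ℝ)) (hXclosed : IsClosed (X : Set C(K, ℝ)))
    (hXlip : ∀ f ∈ X, ∃ L ≥ 0, ∀ t₁ t₂ : K, |f t₁ - f t₂| ≤ L * d t₁ t₂) :
    FiniteDimensional ℝ X :=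
  lipschitz_subspace_finite_dimensional_of_metrizes_general d hd_symm hd_eq hd_tri hd_metrizes X
    hXclosed hXlip
end

section
/- Let K be an infinite compact metric space with metric d, and let X be a finite-dimensional real normed space whose dual unit ball B_{X*} has only finitely many extreme points (i.e., X is polyhedral). Then there exists a linear isometric embedding of X into C(K) whose range consists of d-Lipschitz functions. -/
open Set Metric Filter Topology
open scoped NNReal

/-! By Krein–Milman, the functional `f ↦ f x` attains its maximum `‖x‖` over the dual unit ball
at an extreme point, so the finitely many extreme points `f₁, …, fₙ` norm `X`. Pick distinct
points `tᵢ ∈ K` and Lipschitz tents `φᵢ` of height one at `tᵢ` with disjoint supports. Then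
`x ↦ ∑ fᵢ(x) φᵢ` is linear with Lipschitz values; its sup norm is at most `‖x‖` since the `φᵢ`
sum to at most one, and at least `‖x‖` since its value at `tᵢ` is `fᵢ(x)`. -/

section KreinMilman

variable {E : Type*} [AddCommGroup E] [Module ℝ E] [TopologicalSpace E] [T2Space E]
  [IsTopologicalAddGroup E] [ContinuousSMul ℝ E] [LocallyConvexSpace ℝ E] {s : Set E}

theorem IsCompact.exists_mem_extremePoints_isMaxOn (hs : IsCompact s) (hne : s.Nonempty)
    (l : E →L[ℝ] ℝ) : ∃ y ∈ s.extremePoints ℝ, IsMaxOn l s y := by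
  have hface : IsExposed ℝ s {y ∈ s | ∀ z ∈ s, l z ≤ l y} := fun _ => ⟨l, rfl⟩
  obtain ⟨z, hzs, hz⟩ := hs.exists_isMaxOn hne l.continuous.continuousOn
  obtain ⟨y, hy⟩ := (hface.isCompact hs).extremePoints_nonempty ⟨z, hzs, hz⟩
  exact ⟨y, hface.isExtreme.extremePoints_subset_extremePoints hy, hy.1.2⟩

end KreinMilman

section DualBall

variable {X : Type*} [NormedAddCommGroup X] [NormedSpace ℝ X]

theorem norm_le_one_of_mem_extremePoints_closedBall {f : StrongDual ℝ X}
    (hf : f ∈ extremePoints ℝ (closedBall (0 : StrongDual ℝ X) 1)) : ‖f‖ ≤ 1 :=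
  mem_closedBall_zero_iff.mp (extremePoints_subset hf)

theorem exists_mem_extremePoints_closedBall_apply_eq_norm [FiniteDimensional ℝ X] (x : X) :
    ∃ f ∈ extremePoints ℝ (closedBall (0 : StrongDual ℝ X) 1), f x = ‖x‖ := by
  obtain ⟨f, hf, hmax⟩ :=
    (isCompact_closedBall (0 : StrongDual ℝ X) 1).exists_mem_extremePoints_isMaxOn
      ⟨0, mem_closedBall_self zero_le_one⟩ (ContinuousLinearMap.apply ℝ ℝ x)
  refine ⟨f, hf, le_antisymm ?_ ?_⟩
  · have hf1 := norm_le_one_of_mem_extremePoints_closedBall hf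
    simpa using (le_abs_self _).trans (f.le_of_opNorm_le hf1 x)
  · obtain ⟨g, hg, hgx⟩ := exists_dual_vector'' ℝ x
    calc ‖x‖ = g x := hgx.symm
      _ ≤ f x := hmax (mem_closedBall_zero_iff.mpr hg)

end DualBall

theorem sum_mul_eq_of_sum_le_one {ι : Type*} [Fintype ι] {w : ι → ℝ} (hw : ∀ j, 0 ≤ w j)
    (hsum : ∑ j, w j ≤ 1) {i : ι} (hi : w i = 1) (c : ι → ℝ) : ∑ j, w j * c j = c i := by
  classical
  have hrest : ∀ j ∈ Finset.univ.erase i, w j = 0 := by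
    refine (Finset.sum_eq_zero_iff_of_nonneg fun j _ => hw j).mp (le_antisymm ?_ ?_)
    · linarith [Finset.add_sum_erase Finset.univ w (Finset.mem_univ i)]
    · exact Finset.sum_nonneg fun j _ => hw j
  rw [Finset.sum_eq_single i, hi, one_mul]
  · intro j _ hj
    rw [hrest j (Finset.mem_erase.mpr ⟨hj, Finset.mem_univ j⟩), zero_mul]
  · exact fun h => absurd (Finset.mem_univ i) h

theorem abs_sum_mul_le_of_sum_le_one {ι : Type*} [Fintype ι] {w c : ι → ℝ} {M : ℝ}
    (hw : ∀ j, 0 ≤ w j) (hsum : ∑ j, w j ≤ 1) (hM : 0 ≤ M) (hc : ∀ j, |c j| ≤ M) :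
    |∑ j, w j * c j| ≤ M :=
  calc |∑ j, w j * c j| ≤ ∑ j, w j * |c j| := by
        simpa only [abs_mul, abs_of_nonneg (hw _)] using
          Finset.abs_sum_le_sum_abs (fun j => w j * c j) Finset.univ
    _ ≤ ∑ j, w j * M := Finset.sum_le_sum fun j _ => mul_le_mul_of_nonneg_left (hc j) (hw j)
    _ = (∑ j, w j) * M := (Finset.sum_mul _ _ _).symm
    _ ≤ M := mul_le_of_le_one_left hM hsum

theorem LipschitzWith.finset_sum {ι α β : Type*} [PseudoEMetricSpace α] [SeminormedAddCommGroup β]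
    (s : Finset ι) {f : ι → α → β} {L : ι → ℝ≥0} (hf : ∀ i ∈ s, LipschitzWith (L i) (f i)) :
    LipschitzWith (∑ i ∈ s, L i) fun a => ∑ i ∈ s, f i a := by
  classical
  induction s using Finset.induction_on with
  | empty => simpa using LipschitzWith.const (0 : β)
  | insert i s hi ih =>
    simp only [Finset.sum_insert hi]
    exact (hf i (Finset.mem_insert_self i s)).add
      (ih fun j hj => hf j (Finset.mem_insert_of_mem hj))

section Tent

variable {K : Type*} [MetricSpace K]

theorem exists_pos_forall_two_mul_le_dist {ι : Type*} [Finite ι] (t : ι ↪ K) :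
    ∃ r > 0, ∀ i j, i ≠ j → 2 * r ≤ dist (t i) (t j) := by
  have hsmall : ∀ i j, ∀ᶠ r in 𝓝[>] (0 : ℝ), i ≠ j → 2 * r ≤ dist (t i) (t j) := by
    intro i j
    rcases eq_or_ne i j with rfl | hij
    · exact Eventually.of_forall fun _ h => absurd rfl h
    have hpos : 0 < dist (t i) (t j) := dist_pos.2 (t.injective.ne hij)
    filter_upwards [Ioo_mem_nhdsGT (half_pos hpos)] with r hr _
    linarith [hr.2]
  obtain ⟨r, hsep, hr⟩ :=
    ((eventually_all.2 fun i => eventually_all.2 (hsmall i)).and self_mem_nhdsWithin).exists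
  exact ⟨r, hr, hsep⟩

noncomputable def tent (a : K) (r : ℝ) (τ : K) : ℝ := max (1 - dist τ a / r) 0

theorem tent_nonneg (a : K) (r : ℝ) (τ : K) : 0 ≤ tent a r τ := le_max_right _ _

theorem tent_le_one (a : K) {r : ℝ} (hr : 0 ≤ r) (τ : K) : tent a r τ ≤ 1 :=
  max_le (sub_le_self _ (div_nonneg dist_nonneg hr)) zero_le_one

theorem tent_self (a : K) (r : ℝ) : tent a r a = 1 := by simp [tent]

theorem tent_eq_zero_of_le_dist {a τ : K} {r : ℝ} (hr : 0 < r) (h : r ≤ dist τ a) :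
    tent a r τ = 0 :=
  max_eq_right (sub_nonpos.mpr ((one_le_div hr).mpr h))

theorem lipschitzWith_tent (a : K) {r : ℝ} (hr : 0 < r) :
    LipschitzWith (Real.toNNReal r⁻¹) (tent a r) := by
  refine LipschitzWith.of_dist_le' fun τ₁ τ₂ => ?_
  calc dist (tent a r τ₁) (tent a r τ₂)
      ≤ |(1 - dist τ₁ a / r) - (1 - dist τ₂ a / r)| := abs_max_sub_max_le_abs _ _ _
    _ = r⁻¹ * |dist τ₁ a - dist τ₂ a| := by
        rw [abs_sub_comm, ← abs_of_pos (inv_pos.mpr hr), ← abs_mul]; congr 1; ring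
    _ ≤ r⁻¹ * dist τ₁ τ₂ := by gcongr; exact abs_dist_sub_le _ _ _

theorem sum_tent_le_one {ι : Type*} [Fintype ι] {t : ι ↪ K} {r : ℝ} (hr : 0 < r)
    (hsep : ∀ i j, i ≠ j → 2 * r ≤ dist (t i) (t j)) (τ : K) : ∑ i, tent (t i) r τ ≤ 1 := by
  by_cases hnear : ∃ i, dist τ (t i) < r
  · obtain ⟨i, hi⟩ := hnear
    have hfar : ∀ j ≠ i, r ≤ dist τ (t j) := fun j hj => by
      linarith [hsep i j hj.symm, dist_triangle_left (t i) (t j) τ]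
    rw [Finset.sum_eq_single i (fun j _ hj => tent_eq_zero_of_le_dist hr (hfar j hj))
      (fun h => absurd (Finset.mem_univ i) h)]
    exact tent_le_one _ hr.le τ
  · push Not at hnear
    simp [tent_eq_zero_of_le_dist hr (hnear _)]

theorem exists_lipschitzWith_peaked_family {ι : Type*} [Fintype ι] (t : ι ↪ K) :
    ∃ (φ : ι → K → ℝ) (L : ℝ≥0), (∀ i, LipschitzWith L (φ i)) ∧ (∀ i τ, 0 ≤ φ i τ) ∧
      (∀ i, φ i (t i) = 1) ∧ ∀ τ, ∑ i, φ i τ ≤ 1 := by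
  obtain ⟨r, hr, hsep⟩ := exists_pos_forall_two_mul_le_dist t
  exact ⟨fun i => tent (t i) r, _, fun i => lipschitzWith_tent _ hr, fun i => tent_nonneg _ r,
    fun i => tent_self _ r, sum_tent_le_one hr hsep⟩

end Tent

theorem exists_isometry_lipschitz_of_norming_family {X K ι : Type*} [NormedAddCommGroup X]
    [NormedSpace ℝ X] [MetricSpace K] [CompactSpace K] [Fintype ι] {f : ι → StrongDual ℝ X}
    (hf : ∀ i, ‖f i‖ ≤ 1) (hnorming : ∀ x, ∃ i, f i x = ‖x‖) (t : ι ↪ K) :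
    ∃ J : X →L[ℝ] C(K, ℝ), (∀ x, ‖J x‖ = ‖x‖) ∧ ∀ x, ∃ L, LipschitzWith L (J x) := by
  obtain ⟨φ, L, hφL, hφ0, hφt, hφsum⟩ := exists_lipschitzWith_peaked_family t
  let J : X →L[ℝ] C(K, ℝ) := ∑ i, (f i).smulRight (⟨φ i, (hφL i).continuous⟩ : C(K, ℝ))
  have hJ : ∀ x τ, J x τ = ∑ i, φ i τ * f i x := fun x τ => by simp [J, mul_comm]
  have hfx : ∀ x i, |f i x| ≤ ‖x‖ := fun x i => by
    simpa using (f i).le_of_opNorm_le (hf i) x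
  refine ⟨J, fun x => le_antisymm ?_ ?_, fun x => ?_⟩
  · refine (ContinuousMap.norm_le _ (norm_nonneg x)).2 fun τ => ?_
    rw [Real.norm_eq_abs, hJ]
    exact abs_sum_mul_le_of_sum_le_one (hφ0 · τ) (hφsum τ) (norm_nonneg x) (hfx x)
  · obtain ⟨i, hi⟩ := hnorming x
    calc ‖x‖ = ‖J x (t i)‖ := by
          rw [hJ, sum_mul_eq_of_sum_le_one (hφ0 · (t i)) (hφsum _) (hφt i), hi, norm_norm]
      _ ≤ ‖J x‖ := ContinuousMap.norm_coe_le_norm _ _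
  · have hJx : ⇑(J x) = fun τ => ∑ i, f i x • φ i τ := funext fun τ => by
      simp only [hJ, smul_eq_mul, mul_comm]
    rw [hJx]
    exact ⟨_, LipschitzWith.finset_sum _ fun i _ => (lipschitzWith_smul (f i x)).comp (hφL i)⟩

/-- Let `K` be an infinite compact metric space and `X` a
finite-dimensional real normed space whose dual unit ball has only finitely many extreme
points (`X` polyhedral). Then there is a linear isometric embedding of `X` into `C(K)`
whose range consists of Lipschitz functions. -/
theorem polyhedral_isometric_lipschitz_embedding
    {K : Type*} [MetricSpace K] [CompactSpace K] [Infinite K]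
    {X : Type*} [NormedAddCommGroup X] [NormedSpace ℝ X] [FiniteDimensional ℝ X]
    (hpoly : (Set.extremePoints ℝ (Metric.closedBall (0 : StrongDual ℝ X) 1)).Finite) :
    ∃ J : X →L[ℝ] C(K, ℝ), (∀ x : X, ‖J x‖ = ‖x‖) ∧
      (∀ x : X, ∃ L ≥ 0, ∀ t₁ t₂ : K, |J x t₁ - J x t₂| ≤ L * dist t₁ t₂) := by
  have := hpoly.fintype
  let t : extremePoints ℝ (closedBall (0 : StrongDual ℝ X) 1) ↪ K :=
    (Fintype.equivFin _).toEmbedding.trans (Fin.valEmbedding.trans (Infinite.natEmbedding K))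
  obtain ⟨J, hJ, hlip⟩ := exists_isometry_lipschitz_of_norming_family
    (fun f => norm_le_one_of_mem_extremePoints_closedBall f.2)
    (fun x => (exists_mem_extremePoints_closedBall_apply_eq_norm x).elim
      fun f hf => ⟨⟨f, hf.1⟩, hf.2⟩) t
  refine ⟨J, hJ, fun x => ?_⟩
  obtain ⟨L, hL⟩ := hlip x
  exact ⟨L, L.2, fun t₁ t₂ => by simpa [Real.dist_eq] using hL.dist_le_mul t₁ t₂⟩
end

section
/- Let Q = [0,1]^ℕ be the Hilbert cube with the metric d((aₙ), (bₙ)) = Σ_{k=1}^∞ 2^{-k} |a_k − b_k|. Then for every finite-dimensional real normed space X there exists a linear isometric embedding of X into C(Q) whose range consists of d-Lipschitz functions. -/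
/-!
The closed unit ball `B` of the dual `X*` is a `d`-Lipschitz continuous image `g(Q)` of the
Hilbert cube: an affine map of the first `n = dim X*` coordinates onto a large box (in a basis
of `X*`) covers `B`, and the radial retraction `v ↦ v / max ‖v‖ 1`, which is `2`-Lipschitz,
folds the box back onto `B`. Then `x ↦ (s ↦ g s x)` is the required embedding: it is
isometric by Hahn–Banach, since `‖x‖ = max_{f ∈ B} |f x|`, and `|g s x - g t x| ≤
‖g s - g t‖ ‖x‖`.
-/

open Metric Set

section RadialRetraction

variable {E : Type*} [NormedAddCommGroup E] [NormedSpace ℝ E]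

noncomputable def radialRetraction (v : E) : E := (max ‖v‖ 1)⁻¹ • v

lemma norm_radialRetraction_le_one (v : E) : ‖radialRetraction v‖ ≤ 1 := by
  have h0 : 0 < max ‖v‖ 1 := lt_max_of_lt_right one_pos
  rw [radialRetraction, norm_smul, norm_inv, Real.norm_of_nonneg h0.le, inv_mul_le_one₀ h0]
  exact le_max_left _ _

lemma radialRetraction_of_norm_le_one {v : E} (h : ‖v‖ ≤ 1) : radialRetraction v = v := by
  rw [radialRetraction, max_eq_right h, inv_one, one_smul]

lemma lipschitzWith_radialRetraction : LipschitzWith 2 (radialRetraction : E → E) := by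
  refine LipschitzWith.of_dist_le_mul fun v w => ?_
  simp only [dist_eq_norm, NNReal.coe_ofNat, radialRetraction]
  set a := max ‖v‖ 1
  set b := max ‖w‖ 1
  have ha : 1 ≤ a := le_max_right _ _
  have hb : 1 ≤ b := le_max_right _ _
  have ha₀ : 0 < a := zero_lt_one.trans_le ha
  have hb₀ : 0 < b := zero_lt_one.trans_le hb
  have hwb : ‖w‖ ≤ b := le_max_left _ _
  have hba : |b - a| ≤ ‖v - w‖ := (abs_max_sub_max_le_abs _ _ _).trans <| by
    rw [abs_sub_comm]; exact abs_norm_sub_norm_le v w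
  have h₁ : ‖a⁻¹ • (v - w)‖ ≤ ‖v - w‖ := by
    rw [norm_smul, norm_inv, Real.norm_of_nonneg ha₀.le]
    exact mul_le_of_le_one_left (norm_nonneg _) (inv_le_one_of_one_le₀ ha)
  have h₂ : ‖(a⁻¹ - b⁻¹) • w‖ ≤ ‖v - w‖ := by
    rw [norm_smul, inv_sub_inv ha₀.ne' hb₀.ne', Real.norm_eq_abs, abs_div,
      abs_of_pos (mul_pos ha₀ hb₀)]
    calc |b - a| / (a * b) * ‖w‖ ≤ ‖v - w‖ / (a * b) * b := by gcongr
      _ = ‖v - w‖ / a := by field_simp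
      _ ≤ ‖v - w‖ := div_le_self (norm_nonneg _) ha
  calc ‖a⁻¹ • v - b⁻¹ • w‖ = ‖a⁻¹ • (v - w) + (a⁻¹ - b⁻¹) • w‖ := by
        rw [smul_sub, sub_smul]; abel_nf
    _ ≤ 2 * ‖v - w‖ := by linarith [norm_add_le_of_le h₁ h₂]

end RadialRetraction

noncomputable def cubeDist (s t : ℕ → unitInterval) : ℝ :=
  ∑' k : ℕ, (2 : ℝ)⁻¹ ^ (k + 1) * |(s k : ℝ) - (t k : ℝ)|

lemma summable_cubeDist (s t : ℕ → unitInterval) :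
    Summable fun k : ℕ => (2 : ℝ)⁻¹ ^ (k + 1) * |(s k : ℝ) - (t k : ℝ)| := by
  refine Summable.of_nonneg_of_le (fun k => by positivity) (fun k => ?_)
    ((summable_nat_add_iff 1).2 <| summable_geometric_of_lt_one (r := (2 : ℝ)⁻¹)
      (by norm_num) (by norm_num))
  refine mul_le_of_le_one_right (by positivity) (abs_sub_le_iff.2 ⟨?_, ?_⟩) <;>
    linarith [(s k).2.1, (s k).2.2, (t k).2.1, (t k).2.2]

lemma cubeDist_nonneg (s t : ℕ → unitInterval) : 0 ≤ cubeDist s t :=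
  tsum_nonneg fun _ => by positivity

lemma abs_sub_le_two_pow_mul_cubeDist (s t : ℕ → unitInterval) (k : ℕ) :
    |(s k : ℝ) - (t k : ℝ)| ≤ 2 ^ (k + 1) * cubeDist s t := by
  have h := (summable_cubeDist s t).le_tsum k fun _ _ => by positivity
  rwa [inv_pow, inv_mul_le_iff₀ (by positivity)] at h

/-- Lipschitz continuity for the metric `cubeDist`; the cube itself keeps the product topology
of `ℕ → unitInterval`. -/
def CubeLipschitz {E : Type*} [SeminormedAddCommGroup E] (f : (ℕ → unitInterval) → E) :
    Prop :=
  ∃ L ≥ 0, ∀ s t, ‖f s - f t‖ ≤ L * cubeDist s t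

lemma CubeLipschitz.comp_lipschitzWith {E F : Type*} [SeminormedAddCommGroup E]
    [SeminormedAddCommGroup F]
    {f : (ℕ → unitInterval) → E} {g : E → F} {K : NNReal} (hf : CubeLipschitz f)
    (hg : LipschitzWith K g) : CubeLipschitz (g ∘ f) := by
  obtain ⟨L, hL, hfL⟩ := hf
  refine ⟨K * L, by positivity, fun s t => ?_⟩
  calc ‖g (f s) - g (f t)‖ ≤ K * ‖f s - f t‖ := hg.norm_sub_le (f s) (f t)
    _ ≤ K * (L * cubeDist s t) := by gcongr; exact hfL s t
    _ = K * L * cubeDist s t := by ring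

section Box

variable (n : ℕ) (R : ℝ)

def cubeToBox (s : ℕ → unitInterval) : Fin n → ℝ := fun j => R * (2 * s j - 1)

lemma continuous_cubeToBox : Continuous (cubeToBox n R) := by
  unfold cubeToBox; fun_prop

variable {R}

lemma cubeLipschitz_cubeToBox (hR : 0 ≤ R) : CubeLipschitz (cubeToBox n R) := by
  refine ⟨2 ^ (n + 1) * R, by positivity, fun s t => ?_⟩
  refine (pi_norm_le_iff_of_nonneg (mul_nonneg (by positivity) (cubeDist_nonneg s t))).2
    fun j => ?_
  have hdiff : cubeToBox n R s j - cubeToBox n R t j = 2 * R * ((s j : ℝ) - t j) := by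
    simp only [cubeToBox]; ring
  have hj : j.val + 2 ≤ n + 1 := by omega
  have hd := cubeDist_nonneg s t
  calc ‖cubeToBox n R s j - cubeToBox n R t j‖ = 2 * R * |(s j : ℝ) - t j| := by
        rw [hdiff, Real.norm_eq_abs, abs_mul, abs_of_nonneg (by positivity)]
    _ ≤ 2 * R * (2 ^ (j.val + 1) * cubeDist s t) := by
        gcongr; exact abs_sub_le_two_pow_mul_cubeDist s t j
    _ = 2 ^ (j.val + 2) * R * cubeDist s t := by ring
    _ ≤ 2 ^ (n + 1) * R * cubeDist s t := by gcongr; norm_num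

lemma closedBall_subset_range_cubeToBox (hR : 0 ≤ R) :
    closedBall (0 : Fin n → ℝ) R ⊆ range (cubeToBox n R) := by
  intro v hv
  rcases hR.eq_or_lt with rfl | hR
  · refine ⟨fun _ => 0, funext fun j => ?_⟩
    rw [closedBall_zero, mem_singleton_iff] at hv
    simp [cubeToBox, hv]
  have hvR : ∀ j, |v j| ≤ R := fun j =>
    (norm_le_pi_norm v j).trans (mem_closedBall_zero_iff.1 hv)
  have hmem : ∀ j, (v j / R + 1) / 2 ∈ unitInterval := fun j => by
    obtain ⟨h₁, h₂⟩ := abs_le.1 (hvR j)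
    have : -1 ≤ v j / R := by rw [le_div_iff₀ hR]; linarith
    have : v j / R ≤ 1 := by rw [div_le_iff₀ hR]; linarith
    constructor <;> linarith
  refine ⟨fun k => if h : k < n then ⟨_, hmem ⟨k, h⟩⟩ else 0, funext fun j => ?_⟩
  simp only [cubeToBox, Fin.is_lt, dif_pos]
  field_simp
  ring

end Box

theorem exists_cubeLipschitz_closedBall_subset_range (V : Type*) [NormedAddCommGroup V]
    [NormedSpace ℝ V] [FiniteDimensional ℝ V] :
    ∃ φ : (ℕ → unitInterval) → V,
      Continuous φ ∧ CubeLipschitz φ ∧ closedBall 0 1 ⊆ range φ := by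
  let e : V ≃L[ℝ] (Fin (Module.finrank ℝ V) → ℝ) :=
    (Module.finBasis ℝ V).equivFun.toContinuousLinearEquiv
  refine ⟨e.symm ∘ cubeToBox _ ‖e.toContinuousLinearMap‖,
    e.symm.continuous.comp (continuous_cubeToBox _ _),
    (cubeLipschitz_cubeToBox _ (norm_nonneg _)).comp_lipschitzWith e.symm.lipschitz,
    fun v hv => ?_⟩
  have hev : e v ∈ closedBall 0 ‖e.toContinuousLinearMap‖ := mem_closedBall_zero_iff.2 <|
    (e.toContinuousLinearMap.le_opNorm_of_le (mem_closedBall_zero_iff.1 hv)).trans_eq (mul_one _)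
  obtain ⟨s, hs⟩ := closedBall_subset_range_cubeToBox _ (norm_nonneg _) hev
  exact ⟨s, by simp [hs]⟩

theorem exists_cubeLipschitz_range_eq_closedBall (V : Type*) [NormedAddCommGroup V]
    [NormedSpace ℝ V] [FiniteDimensional ℝ V] :
    ∃ g : C((ℕ → unitInterval), V), CubeLipschitz g ∧ range g = closedBall 0 1 := by
  obtain ⟨φ, hφ_cont, hφ_lip, hφ_range⟩ := exists_cubeLipschitz_closedBall_subset_range V
  refine ⟨⟨radialRetraction ∘ φ, lipschitzWith_radialRetraction.continuous.comp hφ_cont⟩,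
    hφ_lip.comp_lipschitzWith lipschitzWith_radialRetraction, ?_⟩
  refine (range_subset_iff.2 fun s =>
    mem_closedBall_zero_iff.2 (norm_radialRetraction_le_one _)).antisymm fun v hv => ?_
  obtain ⟨s, rfl⟩ := hφ_range hv
  exact ⟨s, radialRetraction_of_norm_le_one (mem_closedBall_zero_iff.1 hv)⟩

section DualEvaluation

variable {𝕜 E K : Type*} [RCLike 𝕜] [NormedAddCommGroup E] [NormedSpace 𝕜 E]
  [TopologicalSpace K] [CompactSpace K]

noncomputable def dualEvaluation (g : C(K, StrongDual 𝕜 E)) (hg : ∀ s, ‖g s‖ ≤ 1) :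
    E →L[𝕜] C(K, 𝕜) :=
  LinearMap.mkContinuous
    { toFun := fun x =>
        ⟨fun s => g s x, (ContinuousLinearMap.apply 𝕜 𝕜 x).continuous.comp g.continuous⟩
      map_add' := fun x y => by ext s; exact map_add (g s) x y
      map_smul' := fun c x => by ext s; exact map_smul (g s) c x }
    1 fun x => (ContinuousMap.norm_le _ (by positivity)).2 fun s => (g s).le_of_opNorm_le (hg s) x

lemma norm_dualEvaluation (g : C(K, StrongDual 𝕜 E)) (hg : ∀ s, ‖g s‖ ≤ 1)
    (hball : closedBall 0 1 ⊆ range g) (x : E) : ‖dualEvaluation g hg x‖ = ‖x‖ := by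
  refine le_antisymm ?_ ?_
  · exact ((dualEvaluation g hg).le_opNorm x).trans
      (mul_le_of_le_one_left (norm_nonneg x) (LinearMap.mkContinuous_norm_le _ zero_le_one _))
  · obtain ⟨f, hf, hfx⟩ := exists_dual_vector'' 𝕜 x
    obtain ⟨s, rfl⟩ := hball (mem_closedBall_zero_iff.2 hf)
    calc ‖x‖ = ‖g s x‖ := by rw [hfx, RCLike.norm_ofReal, abs_norm]
      _ ≤ ‖dualEvaluation g hg x‖ := (dualEvaluation g hg x).norm_coe_le_norm s

end DualEvaluation

/-- Let `Q = [0,1]^ℕ` be the Hilbert cube with the metric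
`d(a, b) = Σ_{k} 2^{-(k+1)} |a_k − b_k|`. Then every finite-dimensional real normed space
embeds linearly isometrically into `C(Q)` with `d`-Lipschitz range. -/
theorem hilbert_cube_contains_all_finite_dimensional
    (X : Type*) [NormedAddCommGroup X] [NormedSpace ℝ X] [FiniteDimensional ℝ X] :
    ∃ J : X →L[ℝ] C((ℕ → unitInterval), ℝ),
      (∀ x : X, ‖J x‖ = ‖x‖) ∧
      (∀ x : X, ∃ L ≥ 0, ∀ s t : ℕ → unitInterval,
        |J x s - J x t| ≤ L * ∑' k : ℕ, (2 : ℝ)⁻¹ ^ (k + 1) * |(s k : ℝ) - (t k : ℝ)|) := by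
  obtain ⟨g, hg_lip, hg_range⟩ := exists_cubeLipschitz_range_eq_closedBall (StrongDual ℝ X)
  have hg : ∀ s, ‖g s‖ ≤ 1 := fun s =>
    mem_closedBall_zero_iff.1 (hg_range ▸ mem_range_self s)
  exact ⟨dualEvaluation g hg, norm_dualEvaluation g hg hg_range.ge,
    fun x => hg_lip.comp_lipschitzWith (ContinuousLinearMap.lipschitz_apply x)⟩
end

section
/- Suppose K is not fragmented by d. Then there exist ε > 0 and families (U_s) and (V_s) of open subsets of K indexed by the finite sequences s ∈ {0,1}^{<ℕ}, with each V_s nonempty, satisfying: (1) U_{s⌢0} ∪ U_{s⌢1} ⊆ U_s and V_{s⌢0} ∪ V_{s⌢1} ⊆ V_s for every s; (2) the closure of V_s is contained in U_s for every s; (3) d(closure(V_s), K \ U_s) > ε for every s (where the distance between two sets is the infimum of d over pairs of points); (4) U_{s⌢0} ∩ U_{s⌢1} = ∅ for every s. -/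
open Set

/-- For a lower semicontinuous "metric" `d` and a compact set `C`, the set of points
uniformly `c`-far from `C` is open. -/
lemma far_open_aux {K : Type*} [TopologicalSpace K] (d : K → K → ℝ)
    (hd_lsc : LowerSemicontinuous fun p : K × K => d p.1 p.2)
    {C : Set K} (hC : IsCompact C) (c : ℝ) :
    IsOpen {q : K | ∀ p ∈ C, c < d p q} := by
  rw [isOpen_iff_forall_mem_open]
  intro q hq
  have hopen : IsOpen {z : K × K | c < d z.1 z.2} := hd_lsc.isOpen_preimage c
  have hsub : C ×ˢ ({q} : Set K) ⊆ {z : K × K | c < d z.1 z.2} := by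
    rintro ⟨p, q'⟩ ⟨hp, hq'⟩
    simp only [mem_singleton_iff] at hq'
    subst hq'
    exact hq p hp
  obtain ⟨u, v, hu, hv, hCu, hqv, huv⟩ :=
    generalized_tube_lemma hC isCompact_singleton hopen hsub
  exact ⟨v, fun q' hq' p hp => huv (Set.mk_mem_prod (hCu hp) hq'), hv, hqv rfl⟩

/-- If `K` is not fragmented by `d`, there are `ε > 0` and families
`(U_s)`, `(V_s)` of open sets indexed by finite 0-1 sequences, with `V_s` nonempty,
such that: (1) `U_{s⌢b} ⊆ U_s`, `V_{s⌢b} ⊆ V_s`; (2) `closure (V_s) ⊆ U_s`;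
(3) `d(closure (V_s), K \ U_s) > ε`; (4) `U_{s⌢0} ∩ U_{s⌢1} = ∅`. -/
theorem dyadic_tree_of_not_fragmented
    {K : Type*} [TopologicalSpace K] [CompactSpace K] [T2Space K]
    (d : K → K → ℝ)
    (hd_nonneg : ∀ x y, 0 ≤ d x y)
    (hd_symm : ∀ x y, d x y = d y x)
    (hd_eq : ∀ x y, d x y = 0 ↔ x = y)
    (hd_tri : ∀ x y z, d x z ≤ d x y + d y z)
    (hd_lsc : LowerSemicontinuous fun p : K × K => d p.1 p.2)
    (hnotfrag : ¬ (∀ A : Set K, A.Nonempty → ∀ ε > 0, ∃ U : Set K, IsOpen U ∧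
      (A ∩ U).Nonempty ∧ ∀ x ∈ A ∩ U, ∀ y ∈ A ∩ U, d x y < ε)) :
    ∃ ε > (0 : ℝ), ∃ U V : List Bool → Set K,
      (∀ s : List Bool, IsOpen (U s) ∧ IsOpen (V s) ∧ (V s).Nonempty) ∧
      (∀ (s : List Bool) (b : Bool), U (s ++ [b]) ⊆ U s ∧ V (s ++ [b]) ⊆ V s) ∧
      (∀ s : List Bool, closure (V s) ⊆ U s) ∧
      (∀ s : List Bool, ENNReal.ofReal ε <
        ⨅ x ∈ closure (V s), ⨅ y ∈ (U s)ᶜ, ENNReal.ofReal (d x y)) ∧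
      (∀ s : List Bool, U (s ++ [false]) ∩ U (s ++ [true]) = ∅) := by
  push_neg at hnotfrag
  obtain ⟨A, hAne, ε0, hε0, hA⟩ := hnotfrag
  obtain ⟨ε, hε, hεeq⟩ : ∃ ε : ℝ, 0 < ε ∧ ε0 = 7 * ε := ⟨ε0 / 7, by positivity, by ring⟩
  -- the invariant maintained along the tree
  set Inv : Set K × Set K → Prop := fun p =>
    IsOpen p.1 ∧ IsOpen p.2 ∧ (A ∩ p.2).Nonempty ∧ closure p.2 ⊆ p.1 ∧
      ∀ u ∈ closure p.2, ∀ q ∈ p.1ᶜ, 3 * ε < d u q with hInv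
  -- one step of the construction
  have step : ∀ p : Set K × Set K, Inv p → ∃ c : Bool → Set K × Set K,
      (∀ b, Inv (c b) ∧ (c b).1 ⊆ p.1 ∧ (c b).2 ⊆ p.2) ∧
      (c false).1 ∩ (c true).1 = ∅ := by
    rintro ⟨Uo, Vo⟩ ⟨hUo, hVo, hAVo, hclUV, hfar⟩
    -- two far-apart points of `A` inside `Vo`
    obtain ⟨x, hx, y, hy, hxy⟩ := hA Vo hVo hAVo
    have hxy' : 7 * ε ≤ d x y := hεeq ▸ hxy
    -- the sublevel set around `y` is closed
    have hScl : IsClosed {p : K | d p y ≤ 6 * ε} := by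
      have : IsOpen ((fun p : K => (p, y)) ⁻¹' {z : K × K | 6 * ε < d z.1 z.2}) :=
        (hd_lsc.isOpen_preimage (6 * ε)).preimage (continuous_id.prodMk continuous_const)
      have heq : {p : K | d p y ≤ 6 * ε} =
          ((fun p : K => (p, y)) ⁻¹' {z : K × K | 6 * ε < d z.1 z.2})ᶜ := by
        ext p; simp [not_lt]
      rw [heq]
      exact this.isClosed_compl
    -- choose V0, a neighborhood of x whose closure avoids the sublevel set and stays in Vo
    have hxW : x ∈ Vo ∩ {p : K | d p y ≤ 6 * ε}ᶜ := by
      refine ⟨hx.2, ?_⟩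
      simp only [mem_compl_iff, mem_setOf_eq, not_le]
      nlinarith
    have hWopen : IsOpen (Vo ∩ {p : K | d p y ≤ 6 * ε}ᶜ) := hVo.inter hScl.isOpen_compl
    obtain ⟨t, ht, htcl, hts⟩ :=
      exists_mem_nhds_isClosed_subset (hWopen.mem_nhds hxW)
    set V0 : Set K := interior t with hV0
    have hxV0 : x ∈ V0 := mem_interior_iff_mem_nhds.2 ht
    have hclV0 : closure V0 ⊆ Vo ∩ {p : K | d p y ≤ 6 * ε}ᶜ :=
      (closure_minimal interior_subset htcl).trans hts
    have hC0 : IsCompact (closure V0) := isClosed_closure.isCompact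
    have hC0far : ∀ p ∈ closure V0, 6 * ε < d p y := by
      intro p hp
      have := (hclV0 hp).2
      simpa only [mem_compl_iff, mem_setOf_eq, not_le] using this
    -- choose V1, a neighborhood of y far from closure V0 and inside Vo
    have hΩopen : IsOpen {q : K | ∀ p ∈ closure V0, 6 * ε < d p q} :=
      far_open_aux d hd_lsc hC0 (6 * ε)
    have hyΩ : y ∈ Vo ∩ {q : K | ∀ p ∈ closure V0, 6 * ε < d p q} :=
      ⟨hy.2, fun p hp => hC0far p hp⟩
    obtain ⟨t1, ht1, ht1cl, ht1s⟩ :=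
      exists_mem_nhds_isClosed_subset ((hVo.inter hΩopen).mem_nhds hyΩ)
    set V1 : Set K := interior t1 with hV1
    have hyV1 : y ∈ V1 := mem_interior_iff_mem_nhds.2 ht1
    have hclV1 : closure V1 ⊆ Vo ∩ {q : K | ∀ p ∈ closure V0, 6 * ε < d p q} :=
      (closure_minimal interior_subset ht1cl).trans ht1s
    have hC1 : IsCompact (closure V1) := isClosed_closure.isCompact
    -- the two closures are uniformly far apart
    have hsep : ∀ p ∈ closure V0, ∀ q ∈ closure V1, 6 * ε < d p q :=
      fun p hp q hq => (hclV1 hq).2 p hp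
    -- the enlargements
    have hE : ∀ W : Set K, W ⊆ Vo → IsCompact (closure W) →
        IsClosed {q : K | ∃ p ∈ closure W, d p q ≤ 3 * ε} ∧
        closure W ⊆ {q : K | ∃ p ∈ closure W, d p q ≤ 3 * ε} ∧
        {q : K | ∃ p ∈ closure W, d p q ≤ 3 * ε} ⊆ Uo := by
      intro W hWVo hcW
      refine ⟨?_, ?_, ?_⟩
      · have heq : {q : K | ∃ p ∈ closure W, d p q ≤ 3 * ε} =
            {q : K | ∀ p ∈ closure W, 3 * ε < d p q}ᶜ := by
          ext q
          simp only [mem_setOf_eq, mem_compl_iff, not_forall, not_lt]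
          constructor
          · rintro ⟨p, hp, h⟩; exact ⟨p, hp, h⟩
          · rintro ⟨p, hp, h⟩; exact ⟨p, hp, h⟩
        rw [heq]
        exact (far_open_aux d hd_lsc hcW (3 * ε)).isClosed_compl
      · intro q hq
        exact ⟨q, hq, by rw [(hd_eq q q).2 rfl]; positivity⟩
      · rintro q ⟨p, hp, hpq⟩
        by_contra hqU
        have hpVo : p ∈ closure Vo := closure_mono hWVo hp
        have := hfar p hpVo q hqU
        linarith
    have hV0Vo : V0 ⊆ Vo := fun z hz => (hclV0 (subset_closure hz)).1
    have hV1Vo : V1 ⊆ Vo := fun z hz => (hclV1 (subset_closure hz)).1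
    obtain ⟨hE0cl, hE0sub, hE0U⟩ := hE V0 hV0Vo hC0
    obtain ⟨hE1cl, hE1sub, hE1U⟩ := hE V1 hV1Vo hC1
    set E0 := {q : K | ∃ p ∈ closure V0, d p q ≤ 3 * ε} with hE0
    set E1 := {q : K | ∃ p ∈ closure V1, d p q ≤ 3 * ε} with hE1
    -- the enlargements are disjoint
    have hE01 : Disjoint E0 E1 := by
      rw [Set.disjoint_left]
      rintro q ⟨p0, hp0, h0⟩ ⟨p1, hp1, h1⟩
      have h2 : d p0 p1 ≤ d p0 q + d q p1 := hd_tri p0 q p1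
      have h3 : d q p1 = d p1 q := hd_symm q p1
      have := hsep p0 hp0 p1 hp1
      linarith
    -- separate them by disjoint open sets
    obtain ⟨Ω0, Ω1, hΩ0, hΩ1, hE0Ω, hE1Ω, hΩdis⟩ :=
      NormalSpace.normal E0 E1 hE0cl hE1cl hE01
    refine ⟨fun b => if b then (Uo ∩ Ω1, V1) else (Uo ∩ Ω0, V0), ?_, ?_⟩
    · -- invariant and inclusions for both children
      have key : ∀ (Ω : Set K) (hΩ : IsOpen Ω) (W : Set K) (hW : IsOpen W)
          (hclW : closure W ⊆ {q : K | ∃ p ∈ closure W, d p q ≤ 3 * ε})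
          (hEU : {q : K | ∃ p ∈ closure W, d p q ≤ 3 * ε} ⊆ Uo)
          (hEΩ : {q : K | ∃ p ∈ closure W, d p q ≤ 3 * ε} ⊆ Ω)
          (hWVo : W ⊆ Vo) (hAW : (A ∩ W).Nonempty),
          Inv (Uo ∩ Ω, W) ∧ Uo ∩ Ω ⊆ Uo ∧ W ⊆ Vo := by
        intro Ω hΩ W hW hclW hEU hEΩ hWVo hAW
        refine ⟨⟨hUo.inter hΩ, hW, hAW, fun z hz => ⟨hEU (hclW hz), hEΩ (hclW hz)⟩, ?_⟩,
          inter_subset_left, hWVo⟩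
        intro u hu q hq
        simp only [mem_compl_iff, mem_inter_iff, not_and] at hq
        by_cases hqUo : q ∈ Uo
        · have hqΩ : q ∉ Ω := hq hqUo
          have hqE : q ∉ {q : K | ∃ p ∈ closure W, d p q ≤ 3 * ε} := fun h => hqΩ (hEΩ h)
          simp only [mem_setOf_eq, not_exists, not_and, not_le] at hqE
          exact hqE u hu
        · exact hfar u (closure_mono hWVo hu) q hqUo
      intro b
      cases b
      · simpa using key Ω0 hΩ0 V0 isOpen_interior hE0sub hE0U hE0Ω hV0Vo ⟨x, hx.1, hxV0⟩
      · simpa using key Ω1 hΩ1 V1 isOpen_interior hE1sub hE1U hE1Ω hV1Vo ⟨y, hy.1, hyV1⟩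
    · -- disjointness
      simp only [if_true, if_false, Bool.false_eq_true]
      rw [Set.eq_empty_iff_forall_notMem]
      rintro q ⟨⟨-, hq0⟩, ⟨-, hq1⟩⟩
      exact Set.disjoint_left.1 hΩdis hq0 hq1
  choose! c hc using step
  -- build the tree by recursion on reversed sequences
  set G : List Bool → Set K × Set K :=
    fun l => l.foldr (fun b q => c q b) (Set.univ, Set.univ) with hGdef
  have hroot : Inv (Set.univ, Set.univ) := by
    refine ⟨isOpen_univ, isOpen_univ, by simpa using hAne, subset_univ _, ?_⟩
    intro u hu q hq
    simp at hq
  have hG : ∀ l, Inv (G l) := by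
    intro l
    induction l with
    | nil => exact hroot
    | cons b t ih => exact ((hc (G t) ih).1 b).1
  have hGcons : ∀ (b : Bool) (t : List Bool), G (b :: t) = c (G t) b := fun _ _ => rfl
  have hrev : ∀ (s : List Bool) (b : Bool), (s ++ [b]).reverse = b :: s.reverse := by simp
  refine ⟨ε, hε, fun s => (G s.reverse).1, fun s => (G s.reverse).2, ?_, ?_, ?_, ?_, ?_⟩
  · intro s
    obtain ⟨h1, h2, h3, -, -⟩ := hG s.reverse
    exact ⟨h1, h2, h3.imp fun a ha => ha.2⟩
  · intro s b
    beta_reduce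
    rw [hrev s b, hGcons]
    exact ⟨((hc (G s.reverse) (hG s.reverse)).1 b).2.1, ((hc (G s.reverse) (hG s.reverse)).1 b).2.2⟩
  · intro s
    exact (hG s.reverse).2.2.2.1
  · intro s
    obtain ⟨-, -, -, -, h5⟩ := hG s.reverse
    have h3ε : ENNReal.ofReal ε < ENNReal.ofReal (3 * ε) := by
      rw [ENNReal.ofReal_lt_ofReal_iff (by positivity)]
      linarith
    refine lt_of_lt_of_le h3ε ?_
    refine le_iInf fun u => le_iInf fun hu => le_iInf fun q => le_iInf fun hq => ?_
    exact ENNReal.ofReal_le_ofReal (le_of_lt (h5 u hu q hq))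
  · intro s
    beta_reduce
    rw [hrev s false, hrev s true, hGcons, hGcons]
    exact (hc (G s.reverse) (hG s.reverse)).2
end

section
/- Let K₁ and K₂ be compact Hausdorff spaces endowed with lower semicontinuous metrics d₁ and d₂ respectively, and let φ : K₂ → K₁ be a continuous surjection which is λ-Lipschitz from (K₂, d₂) to (K₁, d₁). For a subset B of a compact space with metric ρ and δ > 0, define the derived set ⟨B⟩'_δ = {x ∈ B : for every open neighborhood U of x, the ρ-diameter of B ∩ U is at least δ}. Then for every closed subset A ⊆ K₂, every ε > 0, and every δ > 2λε, one has ⟨φ(A)⟩'_δ ⊆ φ(⟨A⟩'_ε), where the derivation of φ(A) is with respect to d₁ and that of A with respect to d₂. -/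
/-- Let `φ : K₂ → K₁` be a continuous surjection between compact
Hausdorff spaces with lower semicontinuous metrics `d₂`, `d₁`, which is `λ`-Lipschitz.
With `⟨B⟩'_δ = {x ∈ B : every open neighborhood U of x has ρ-diam(B ∩ U) ≥ δ}`, for every
closed `A ⊆ K₂`, every `ε > 0` and every `δ > 2λε` one has `⟨φ(A)⟩'_δ ⊆ φ(⟨A⟩'_ε)`. -/
theorem szlenk_derivation_image
    {K₁ K₂ : Type*} [TopologicalSpace K₁] [CompactSpace K₁] [T2Space K₁]
    [TopologicalSpace K₂] [CompactSpace K₂] [T2Space K₂]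
    (d₁ : K₁ → K₁ → ℝ) (d₂ : K₂ → K₂ → ℝ)
    (hd₁_nonneg : ∀ x y, 0 ≤ d₁ x y)
    (hd₁_symm : ∀ x y, d₁ x y = d₁ y x)
    (hd₁_eq : ∀ x y, d₁ x y = 0 ↔ x = y)
    (hd₁_tri : ∀ x y z, d₁ x z ≤ d₁ x y + d₁ y z)
    (hd₁_lsc : LowerSemicontinuous fun p : K₁ × K₁ => d₁ p.1 p.2)
    (hd₂_nonneg : ∀ x y, 0 ≤ d₂ x y)
    (hd₂_symm : ∀ x y, d₂ x y = d₂ y x)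
    (hd₂_eq : ∀ x y, d₂ x y = 0 ↔ x = y)
    (hd₂_tri : ∀ x y z, d₂ x z ≤ d₂ x y + d₂ y z)
    (hd₂_lsc : LowerSemicontinuous fun p : K₂ × K₂ => d₂ p.1 p.2)
    (φ : K₂ → K₁) (hφcont : Continuous φ) (hφsurj : Function.Surjective φ)
    (lam : ℝ) (hlam : 0 ≤ lam)
    (hφlip : ∀ x y : K₂, d₁ (φ x) (φ y) ≤ lam * d₂ x y) :
    ∀ A : Set K₂, IsClosed A → ∀ ε > (0 : ℝ), ∀ δ : ℝ, 2 * lam * ε < δ →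
      {x ∈ φ '' A | ∀ U : Set K₁, IsOpen U → x ∈ U →
          ENNReal.ofReal δ ≤
            ⨆ y ∈ (φ '' A) ∩ U, ⨆ z ∈ (φ '' A) ∩ U, ENNReal.ofReal (d₁ y z)} ⊆
        φ '' {x ∈ A | ∀ U : Set K₂, IsOpen U → x ∈ U →
          ENNReal.ofReal ε ≤ ⨆ y ∈ A ∩ U, ⨆ z ∈ A ∩ U, ENNReal.ofReal (d₂ y z)} := by
  intro A hA ε hε δ hδ x hx
  obtain ⟨hxA, hxU⟩ := hx
  by_contra hcon
  -- the fiber over x inside A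
  set F : Set K₂ := A ∩ φ ⁻¹' {x} with hF
  have hFcomp : IsCompact F :=
    (hA.inter (isClosed_singleton.preimage hφcont)).isCompact
  -- every point of the fiber has a small neighborhood
  have key : ∀ a : F, ∃ V : Set K₂, IsOpen V ∧ (a : K₂) ∈ V ∧
      (⨆ y ∈ A ∩ V, ⨆ z ∈ A ∩ V, ENNReal.ofReal (d₂ y z)) < ENNReal.ofReal ε := by
    rintro ⟨a, haA, hax⟩
    by_contra h
    push_neg at h
    exact hcon ⟨a, ⟨haA, fun U hU haU => h U hU haU⟩, hax⟩
  choose V hVopen hVmem hVsmall using key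
  -- finite subcover of the fiber
  have hcover : F ⊆ ⋃ i : F, V i := fun a ha =>
    Set.mem_iUnion.mpr ⟨⟨a, ha⟩, hVmem ⟨a, ha⟩⟩
  obtain ⟨t, ht⟩ := hFcomp.elim_finite_subcover (fun i : F => V i)
    (fun i => hVopen i) hcover
  set W : Set K₂ := ⋃ i ∈ t, V i with hW
  have hWopen : IsOpen W := isOpen_biUnion fun i _ => hVopen i
  -- C = A \ W, its image is closed and misses x
  set C : Set K₂ := A \ W with hC
  have hCclosed : IsClosed C := hA.sdiff hWopen
  have hφCclosed : IsClosed (φ '' C) :=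
    (hCclosed.isCompact.image hφcont).isClosed
  have hxnot : x ∉ φ '' C := by
    rintro ⟨c, ⟨hcA, hcW⟩, rfl⟩
    exact hcW (ht ⟨hcA, rfl⟩)
  have hUopen : IsOpen (φ '' C)ᶜ := hφCclosed.isOpen_compl
  have hsup := hxU _ hUopen hxnot
  -- extract a pair at distance > 2λε
  have h2 : ENNReal.ofReal (2 * lam * ε) < ENNReal.ofReal δ := by
    apply ENNReal.ofReal_lt_ofReal_iff_of_nonneg _ |>.mpr hδ
    positivity
  have hlt := lt_of_lt_of_le h2 hsup
  rw [lt_iSup_iff] at hlt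
  obtain ⟨y, hlt⟩ := hlt
  rw [lt_iSup_iff] at hlt
  obtain ⟨hy, hlt⟩ := hlt
  rw [lt_iSup_iff] at hlt
  obtain ⟨z, hlt⟩ := hlt
  rw [lt_iSup_iff] at hlt
  obtain ⟨hz, hlt⟩ := hlt
  have hyz : 2 * lam * ε < d₁ y z :=
    (ENNReal.ofReal_lt_ofReal_iff_of_nonneg (by positivity)).mp hlt
  -- y = φ b with b ∈ A ∩ W
  obtain ⟨⟨b, hbA, rfl⟩, hyU⟩ := hy
  obtain ⟨⟨c, hcA, rfl⟩, hzU⟩ := hz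
  have hbW : b ∈ W := by
    by_contra hbW
    exact hyU ⟨b, ⟨hbA, hbW⟩, rfl⟩
  have hcW : c ∈ W := by
    by_contra hcW
    exact hzU ⟨c, ⟨hcA, hcW⟩, rfl⟩
  obtain ⟨i, hit, hbV⟩ := Set.mem_iUnion₂.mp hbW
  obtain ⟨j, hjt, hcV⟩ := Set.mem_iUnion₂.mp hcW
  -- d₂ b i < ε and d₂ c j < ε
  have hdb : d₂ b (i : K₂) < ε := by
    have hiV : (i : K₂) ∈ A ∩ V i := ⟨i.2.1, hVmem i⟩
    have h1 : ENNReal.ofReal (d₂ b (i : K₂)) ≤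
        ⨆ y ∈ A ∩ V i, ⨆ z ∈ A ∩ V i, ENNReal.ofReal (d₂ y z) :=
      le_iSup₂_of_le b ⟨hbA, hbV⟩ (le_iSup₂ (f := fun z (_ : z ∈ A ∩ V i) => ENNReal.ofReal (d₂ b z)) (i : K₂) hiV)
    exact (ENNReal.ofReal_lt_ofReal_iff hε).mp (lt_of_le_of_lt h1 (hVsmall i))
  have hdc : d₂ c (j : K₂) < ε := by
    have hjV : (j : K₂) ∈ A ∩ V j := ⟨j.2.1, hVmem j⟩
    have h1 : ENNReal.ofReal (d₂ c (j : K₂)) ≤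
        ⨆ y ∈ A ∩ V j, ⨆ z ∈ A ∩ V j, ENNReal.ofReal (d₂ y z) :=
      le_iSup₂_of_le c ⟨hcA, hcV⟩ (le_iSup₂ (f := fun z (_ : z ∈ A ∩ V j) => ENNReal.ofReal (d₂ c z)) (j : K₂) hjV)
    exact (ENNReal.ofReal_lt_ofReal_iff hε).mp (lt_of_le_of_lt h1 (hVsmall j))
  -- triangle inequality through x
  have hxi : φ (i : K₂) = x := i.2.2
  have hxj : φ (j : K₂) = x := j.2.2
  have h1 : d₁ (φ b) x ≤ lam * ε := by
    calc d₁ (φ b) x = d₁ (φ b) (φ (i : K₂)) := by rw [hxi]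
    _ ≤ lam * d₂ b (i : K₂) := hφlip _ _
    _ ≤ lam * ε := mul_le_mul_of_nonneg_left hdb.le hlam
  have h2' : d₁ x (φ c) ≤ lam * ε := by
    calc d₁ x (φ c) = d₁ (φ (j : K₂)) (φ c) := by rw [hxj]
    _ = d₁ (φ c) (φ (j : K₂)) := hd₁_symm _ _
    _ ≤ lam * d₂ c (j : K₂) := hφlip _ _
    _ ≤ lam * ε := mul_le_mul_of_nonneg_left hdc.le hlam
  have := hd₁_tri (φ b) x (φ c)
  linarith
end
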